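/- arXiv:math/0501452 — 11 statements merged into one kernel-verified Lean document; each statement's English description precedes it below -/
import Mathlib

section
/- Let M be a non-empty subset of the real symmetric n×n matrices. Then the following are equivalent: (i) the only positive semidefinite matrix in the real linear span of M is 0; (ii) there exists a positive definite matrix Q such that tr(QᵀFQ) = 0 for every F in M; (iii) there exists an invertible matrix T such that tr(TᵀFT) = 0 for every F in M. -/
/-!
The implications (ii) ⇒ (iii) ⇒ (i) are elementary: a positive definite matrix is invertible, and
for positive semidefinite `F` in the span of `M` the matrix `TᵀFT` is positive semidefinite with
trace zero (by linearity), hence zero. For (i) ⇒ (ii), the compact convex set of positive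
semidefinite matrices of trace one is disjoint from the span of `M`, so Hahn–Banach yields a linear
functional vanishing on the span and positive on every nonzero positive semidefinite matrix.
Through the trace pairing it is represented by a symmetric `P`, which is positive definite since
the functional is positive on every `x xᵀ`; then `Q = √P` works because `tr(Q F Q) = tr(P F)`.
-/

open Matrix
open scoped MatrixOrder

theorem LinearMap.map_eq_zero_of_forall_lt_of_mem {𝕜 E : Type*} [Field 𝕜] [LinearOrder 𝕜]
    [IsStrictOrderedRing 𝕜] [AddCommGroup E] [Module 𝕜 E] {V : Submodule 𝕜 E} {f : E →ₗ[𝕜] 𝕜}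
    {v : 𝕜} (h : ∀ b ∈ V, v < f b) {b : E} (hb : b ∈ V) : f b = 0 := by
  by_contra hfb
  have := h (((v - 1) / f b) • b) (V.smul_mem _ hb)
  rw [map_smul, smul_eq_mul, div_mul_cancel₀ _ hfb] at this
  linarith

namespace Matrix

variable {n R : Type*} [Fintype n]

theorem trace_mul_vecMulVec_self [CommSemiring R] (A : Matrix n n R) (x : n → R) :
    (A * vecMulVec x x).trace = x ⬝ᵥ A *ᵥ x := by
  rw [mul_vecMulVec, trace_vecMulVec, dotProduct_comm]

theorem trace_transpose_mul_of_isSymm [CommSemiring R] (P : Matrix n n R) {X : Matrix n n R}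
    (hX : X.IsSymm) : (Pᵀ * X).trace = (P * X).trace := by
  rw [← trace_transpose, transpose_mul, transpose_transpose, hX.eq, trace_mul_comm]

theorem exists_trace_mul_eq [DecidableEq n] [CommSemiring R] (f : Matrix n n R →ₗ[R] R) :
    ∃ P : Matrix n n R, ∀ X, f X = (P * X).trace := by
  set P : Matrix n n R := of fun i j => f (single j i 1)
  have hf : f = traceLinearMap n R R ∘ₗ LinearMap.mulLeft R P :=
    ext_linearMap R fun i j => LinearMap.ext_ring <| by simp [P, trace_mul_single]
  exact ⟨P, fun X => congr($hf X)⟩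

theorem exists_isSymm_trace_mul_eq [DecidableEq n] [CommRing R] [Invertible (2 : R)]
    (f : Matrix n n R →ₗ[R] R) :
    ∃ P : Matrix n n R, P.IsSymm ∧ ∀ X, X.IsSymm → f X = (P * X).trace := by
  obtain ⟨P, hP⟩ := exists_trace_mul_eq f
  refine ⟨(⅟2 : R) • (P + Pᵀ), ?_, fun X hX => ?_⟩
  · simp [IsSymm, add_comm]
  · rw [smul_mul, add_mul, trace_smul, trace_add, trace_transpose_mul_of_isSymm P hX, hP, ← two_mul,
      smul_eq_mul, ← mul_assoc, invOf_mul_self, one_mul]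

theorem trace_conj_eq_zero_of_mem_span [CommSemiring R] {M : Set (Matrix n n R)}
    {T : Matrix n n R} (h : ∀ F ∈ M, (Tᵀ * F * T).trace = 0) {F : Matrix n n R}
    (hF : F ∈ Submodule.span R M) : (Tᵀ * F * T).trace = 0 := by
  induction hF using Submodule.span_induction with
  | mem F hF => exact h F hF
  | zero => simp
  | add F G _ _ hF hG => simp [mul_add, add_mul, hF, hG]
  | smul c F _ hF => simp [hF]

theorem PosSemidef.abs_apply_le_trace {X : Matrix n n ℝ} (hX : X.PosSemidef) (i j : n) :
    |X i j| ≤ X.trace := by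
  classical
  have hdiag (k : n) : X k k ≤ X.trace :=
    Finset.single_le_sum (f := X.diag) (fun l _ => hX.diag_nonneg) (Finset.mem_univ k)
  have hsymm : X j i = X i j := hX.isHermitian.apply i j
  have hquad (s : ℝ) : 0 ≤ X i i + 2 * s * X i j + s ^ 2 * X j j := by
    have := hX.dotProduct_mulVec_nonneg (Pi.single i 1 + Pi.single j s)
    simp only [star_trivial, mulVec_add, mulVec_single, MulOpposite.op_one, one_smul,
      op_smul_eq_smul, dotProduct_add, add_dotProduct, single_dotProduct, col_apply, one_mul, hsymm,
      dotProduct_smul, smul_eq_mul] at this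
    linarith
  rw [abs_le]
  constructor <;> nlinarith [hdiag i, hdiag j, hquad 1, hquad (-1)]

theorem isClosed_setOf_posSemidef : IsClosed {X : Matrix n n ℝ | X.PosSemidef} := by
  have : {X : Matrix n n ℝ | X.PosSemidef} =
      {X | Xᴴ = X} ∩ ⋂ x : n → ℝ, {X | 0 ≤ star x ⬝ᵥ X *ᵥ x} := by
    ext X
    simp [posSemidef_iff_dotProduct_mulVec, IsHermitian]
  rw [this]
  exact (isClosed_eq continuous_id.matrix_conjTranspose continuous_id).inter <|
    isClosed_iInter fun x => isClosed_le continuous_const <|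
      continuous_const.dotProduct (continuous_id.matrix_mulVec continuous_const)

theorem isCompact_setOf_posSemidef_trace_eq_one :
    IsCompact {X : Matrix n n ℝ | X.PosSemidef ∧ X.trace = 1} := by
  refine (isCompact_univ_pi fun _ => isCompact_univ_pi fun _ =>
    isCompact_Icc (a := (-1 : ℝ)) (b := 1)).of_isClosed_subset
    (isClosed_setOf_posSemidef.inter (isClosed_eq continuous_id.matrix_trace continuous_const)) ?_
  rintro X ⟨hX, htr⟩ i - j -
  exact abs_le.mp (htr ▸ hX.abs_apply_le_trace i j)

theorem convex_setOf_posSemidef_trace_eq_one :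
    Convex ℝ {X : Matrix n n ℝ | X.PosSemidef ∧ X.trace = 1} := by
  rintro X ⟨hX, hXtr⟩ Y ⟨hY, hYtr⟩ a b ha hb hab
  exact ⟨(hX.smul ha).add (hY.smul hb), by simp [hXtr, hYtr, hab]⟩

theorem exists_linearMap_pos_of_posSemidef (V : Submodule ℝ (Matrix n n ℝ))
    (hV : ∀ F ∈ V, F.PosSemidef → F = 0) :
    ∃ f : Matrix n n ℝ →ₗ[ℝ] ℝ, (∀ F ∈ V, f F = 0) ∧
      ∀ X : Matrix n n ℝ, X.PosSemidef → X ≠ 0 → 0 < f X := by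
  have : LocallyConvexSpace ℝ (Matrix n n ℝ) := inferInstanceAs (LocallyConvexSpace ℝ (n → n → ℝ))
  have hdisj : Disjoint {X : Matrix n n ℝ | X.PosSemidef ∧ X.trace = 1} V :=
    Set.disjoint_left.mpr fun X ⟨hX, htr⟩ hXV => by simp [hV X hXV hX] at htr
  obtain ⟨f, u, v, hfC, huv, hfV⟩ := geometric_hahn_banach_compact_closed
    convex_setOf_posSemidef_trace_eq_one isCompact_setOf_posSemidef_trace_eq_one V.convex
    V.closed_of_finiteDimensional hdisj
  have hv : v < 0 := by simpa using hfV 0 V.zero_mem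
  refine ⟨-f.toLinearMap, fun F hF => by simp [LinearMap.map_eq_zero_of_forall_lt_of_mem hfV hF],
    fun X hX hX0 => ?_⟩
  have htr : 0 < X.trace := hX.trace_nonneg.lt_of_ne' (hX.trace_eq_zero_iff.not.mpr hX0)
  have hf : (X.trace)⁻¹ * f X < 0 := by
    simpa using (hfC _ ⟨hX.smul (inv_nonneg.2 htr.le), by simp [htr.ne']⟩).trans (huv.trans hv)
  simpa using neg_of_mul_neg_right hf (inv_nonneg.2 htr.le)

theorem exists_posDef_trace_mul_eq_zero [DecidableEq n] (V : Submodule ℝ (Matrix n n ℝ))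
    (hV : ∀ F ∈ V, F.PosSemidef → F = 0) :
    ∃ P : Matrix n n ℝ, P.PosDef ∧ ∀ F ∈ V, F.IsSymm → (P * F).trace = 0 := by
  obtain ⟨f, hfV, hfpos⟩ := exists_linearMap_pos_of_posSemidef V hV
  obtain ⟨P, hPsymm, hP⟩ := exists_isSymm_trace_mul_eq f
  refine ⟨P, PosDef.of_dotProduct_mulVec_pos (isHermitian_iff_isSymm.mpr hPsymm) fun x hx => ?_,
    fun F hF hFsymm => (hP F hFsymm).symm.trans (hfV F hF)⟩
  have hxx : (vecMulVec x x).PosSemidef := by simpa using posSemidef_vecMulVec_self_star x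
  rw [star_trivial, ← trace_mul_vecMulVec_self, ← hP _ (transpose_vecMulVec x x)]
  exact hfpos _ hxx (vecMulVec_ne_zero hx hx)

theorem PosDef.exists_posDef_trace_transpose_mul_mul_eq [DecidableEq n] {P : Matrix n n ℝ} (hP : P.PosDef) :
    ∃ Q : Matrix n n ℝ, Q.PosDef ∧ ∀ F, (Qᵀ * F * Q).trace = (P * F).trace := by
  refine ⟨CFC.sqrt P, hP.isStrictlyPositive.sqrt.posDef, fun F => ?_⟩
  rw [← conjTranspose_eq_transpose_of_trivial, (CFC.sqrt_nonneg P).posSemidef.isHermitian.eq,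
    trace_mul_cycle, CFC.sqrt_mul_sqrt_self P]

theorem exists_posDef_trace_conj_eq_zero [DecidableEq n] {M : Set (Matrix n n ℝ)}
    (hsymm : ∀ F ∈ M, F.IsSymm) (hM : ∀ F ∈ Submodule.span ℝ M, F.PosSemidef → F = 0) :
    ∃ Q : Matrix n n ℝ, Q.PosDef ∧ ∀ F ∈ M, (Qᵀ * F * Q).trace = 0 := by
  obtain ⟨P, hP, hPM⟩ := exists_posDef_trace_mul_eq_zero _ hM
  obtain ⟨Q, hQ, hQP⟩ := hP.exists_posDef_trace_transpose_mul_mul_eq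
  exact ⟨Q, hQ, fun F hF => (hQP F).trans (hPM F (Submodule.subset_span hF) (hsymm F hF))⟩

theorem eq_zero_of_posSemidef_of_trace_conj_eq_zero [DecidableEq n] {T F : Matrix n n ℝ}
    (hT : IsUnit T) (hF : F.PosSemidef) (h : (Tᵀ * F * T).trace = 0) : F = 0 := by
  have hconj : Tᵀ * F * T = 0 := by
    have := hF.conjTranspose_mul_mul_same T
    rw [conjTranspose_eq_transpose_of_trivial] at this
    exact this.trace_eq_zero_iff.mp h
  rw [mul_assoc, ((isUnit_transpose T).mpr hT).mul_right_eq_zero, hT.mul_left_eq_zero] at hconj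
  exact hconj

end Matrix

theorem nondissipative_iff_trace_zero_general {n : ℕ} (M : Set (Matrix (Fin n) (Fin n) ℝ))
    (hsymm : ∀ F ∈ M, F.IsSymm) :
    ((∀ F ∈ Submodule.span ℝ M, F.PosSemidef → F = 0) ↔
      ∃ Q : Matrix (Fin n) (Fin n) ℝ, Q.PosDef ∧ ∀ F ∈ M, (Qᵀ * F * Q).trace = 0) ∧
    ((∀ F ∈ Submodule.span ℝ M, F.PosSemidef → F = 0) ↔
      ∃ T : Matrix (Fin n) (Fin n) ℝ, IsUnit T ∧ ∀ F ∈ M, (Tᵀ * F * T).trace = 0) := by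
  have of_isUnit (T : Matrix (Fin n) (Fin n) ℝ) (hT : IsUnit T)
      (h : ∀ F ∈ M, (Tᵀ * F * T).trace = 0) : ∀ F ∈ Submodule.span ℝ M, F.PosSemidef → F = 0 :=
    fun F hF hpsd => eq_zero_of_posSemidef_of_trace_conj_eq_zero hT hpsd
      (trace_conj_eq_zero_of_mem_span h hF)
  refine ⟨⟨exists_posDef_trace_conj_eq_zero hsymm, fun ⟨Q, hQ, h⟩ => of_isUnit Q hQ.isUnit h⟩,
    ⟨fun hM => ?_, fun ⟨T, hT, h⟩ => of_isUnit T hT h⟩⟩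
  obtain ⟨Q, hQ, h⟩ := exists_posDef_trace_conj_eq_zero hsymm hM
  exact ⟨Q, hQ.isUnit, h⟩

theorem nondissipative_iff_trace_zero {n : ℕ} (M : Set (Matrix (Fin n) (Fin n) ℝ))
    (hM : M.Nonempty) (hsymm : ∀ F ∈ M, F.IsSymm) :
    ((∀ F ∈ Submodule.span ℝ M, F.PosSemidef → F = 0) ↔
      ∃ Q : Matrix (Fin n) (Fin n) ℝ, Q.PosDef ∧ ∀ F ∈ M, (Qᵀ * F * Q).trace = 0) ∧
    ((∀ F ∈ Submodule.span ℝ M, F.PosSemidef → F = 0) ↔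
      ∃ T : Matrix (Fin n) (Fin n) ℝ, IsUnit T ∧ ∀ F ∈ M, (Tᵀ * F * T).trace = 0) :=
  nondissipative_iff_trace_zero_general M hsymm
end

section
/- Let A, B be real symmetric n×n matrices with tr(A) = tr(B) = 0. If {x ∈ ℝⁿ : xᵀAx ≤ 0} ⊆ {x ∈ ℝⁿ : xᵀBx ≤ 0}, then B = cA for some real number c. -/
/-!
Call `x` isotropic for `A` when `xᵀAx = 0`. A traceless symmetric matrix has an orthonormal basis
of isotropic vectors starting with any prescribed unit isotropic vector: complete the vector to an
orthonormal basis and induct on the compression of `A` to its orthogonal complement, which is again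
traceless. On such a basis `B` is `≤ 0` by the cone inclusion while its values sum to `tr B = 0`,
so every `A`-isotropic vector is `B`-isotropic. Evaluating `B` on isotropic combinations of three
isotropic vectors then shows that the bilinear forms of `B` and `A` are proportional on pairs of
isotropic vectors, and reading both matrices off an isotropic orthonormal basis gives `B = c • A`.
-/

open Matrix

section Polarization

variable {R ι : Type*} [CommRing R] [Fintype ι] {A : Matrix ι ι R}

theorem Matrix.IsSymm.dotProduct_mulVec_comm (hA : A.IsSymm) (x y : ι → R) :
    x ⬝ᵥ A *ᵥ y = y ⬝ᵥ A *ᵥ x := by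
  rw [← dotProduct_transpose_mulVec, hA.eq]

theorem Matrix.IsSymm.dotProduct_mulVec_smul_add_smul_add_smul (hA : A.IsSymm)
    (x y z : ι → R) (a b c : R) :
    (a • x + b • y + c • z) ⬝ᵥ A *ᵥ (a • x + b • y + c • z) =
      a ^ 2 * (x ⬝ᵥ A *ᵥ x) + b ^ 2 * (y ⬝ᵥ A *ᵥ y) + c ^ 2 * (z ⬝ᵥ A *ᵥ z) +
        2 * a * b * (x ⬝ᵥ A *ᵥ y) + 2 * a * c * (x ⬝ᵥ A *ᵥ z) + 2 * b * c * (y ⬝ᵥ A *ᵥ z) := by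
  simp only [mulVec_add, mulVec_smul, dotProduct_add, add_dotProduct, dotProduct_smul,
    smul_dotProduct, smul_eq_mul, hA.dotProduct_mulVec_comm y x, hA.dotProduct_mulVec_comm z x,
    hA.dotProduct_mulVec_comm z y]
  ring

theorem Matrix.IsSymm.dotProduct_mulVec_add_add (hA : A.IsSymm) (x y : ι → R) :
    (x + y) ⬝ᵥ A *ᵥ (x + y) = x ⬝ᵥ A *ᵥ x + y ⬝ᵥ A *ᵥ y + 2 * (x ⬝ᵥ A *ᵥ y) := by
  simpa using hA.dotProduct_mulVec_smul_add_smul_add_smul x y 0 1 1 0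

end Polarization

section IsotropicCone

variable {K ι : Type*} [Field K] [CharZero K] [Fintype ι] {A B : Matrix ι ι K}
  (hA : A.IsSymm) (hB : B.IsSymm) (hAB : ∀ x, x ⬝ᵥ A *ᵥ x = 0 → x ⬝ᵥ B *ᵥ x = 0)
include hA hB hAB

theorem dotProduct_mulVec_eq_zero_of_isotropic {x y : ι → K} (hx : x ⬝ᵥ A *ᵥ x = 0)
    (hy : y ⬝ᵥ A *ᵥ y = 0) (hxy : x ⬝ᵥ A *ᵥ y = 0) : x ⬝ᵥ B *ᵥ y = 0 := by
  have hsum := hAB (x + y) (by rw [hA.dotProduct_mulVec_add_add, hx, hy, hxy]; ring)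
  rw [hB.dotProduct_mulVec_add_add, hAB x hx, hAB y hy] at hsum
  simpa using hsum

theorem mul_dotProduct_mulVec_eq_of_isotropic {x y z : ι → K} (hx : x ⬝ᵥ A *ᵥ x = 0)
    (hy : y ⬝ᵥ A *ᵥ y = 0) (hz : z ⬝ᵥ A *ᵥ z = 0) :
    (x ⬝ᵥ A *ᵥ y) * (y ⬝ᵥ B *ᵥ z) = (y ⬝ᵥ A *ᵥ z) * (x ⬝ᵥ B *ᵥ y) := by
  set a₁ := y ⬝ᵥ A *ᵥ z
  set a₂ := x ⬝ᵥ A *ᵥ y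
  set a₃ := x ⬝ᵥ A *ᵥ z
  set b₁ := y ⬝ᵥ B *ᵥ z
  set b₂ := x ⬝ᵥ B *ᵥ y
  set b₃ := x ⬝ᵥ B *ᵥ z
  -- `-t a₁ x + s y + t s z` with `s = a₂ + t a₃` is `A`-isotropic for every `t`
  have hpoly : ∀ t : K,
      t * (a₂ + t * a₃) * (a₂ * b₁ - a₁ * b₂ + t * (a₃ * b₁ - a₁ * b₃)) = 0 := by
    intro t
    have hw := hAB ((-(t * a₁)) • x + (a₂ + t * a₃) • y + (t * (a₂ + t * a₃)) • z) (by
      rw [hA.dotProduct_mulVec_smul_add_smul_add_smul, hx, hy, hz]; ring)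
    rw [hB.dotProduct_mulVec_smul_add_smul_add_smul, hAB x hx, hAB y hy, hAB z hz] at hw
    linear_combination hw / 2
  -- extract the coefficient of `t` from the values at `t = ±1, ±2`
  have hcoeff : a₂ * (a₂ * b₁ - a₁ * b₂) = 0 := by
    linear_combination (8 * (hpoly 1 - hpoly (-1)) - (hpoly 2 - hpoly (-2))) / 12
  rcases mul_eq_zero.1 hcoeff with ha₂ | h
  · rw [ha₂, show b₂ = 0 from dotProduct_mulVec_eq_zero_of_isotropic hA hB hAB hx hy ha₂]
    ring
  · linear_combination h

theorem exists_dotProduct_mulVec_eq_mul_of_isotropic :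
    ∃ c : K, ∀ y z : ι → K, y ⬝ᵥ A *ᵥ y = 0 → z ⬝ᵥ A *ᵥ z = 0 →
      y ⬝ᵥ B *ᵥ z = c * (y ⬝ᵥ A *ᵥ z) := by
  by_cases hdeg : ∀ y z : ι → K, y ⬝ᵥ A *ᵥ y = 0 → z ⬝ᵥ A *ᵥ z = 0 → y ⬝ᵥ A *ᵥ z = 0
  · exact ⟨0, fun y z hy hz => by
      rw [dotProduct_mulVec_eq_zero_of_isotropic hA hB hAB hy hz (hdeg y z hy hz), zero_mul]⟩
  push Not at hdeg
  obtain ⟨p, q, hp, hq, hpq⟩ := hdeg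
  refine ⟨(p ⬝ᵥ B *ᵥ q) / (p ⬝ᵥ A *ᵥ q), ?_⟩
  set c := (p ⬝ᵥ B *ᵥ q) / (p ⬝ᵥ A *ᵥ q)
  have hc : p ⬝ᵥ B *ᵥ q = c * (p ⬝ᵥ A *ᵥ q) := (div_mul_cancel₀ _ hpq).symm
  have propagate : ∀ x y : ι → K, x ⬝ᵥ A *ᵥ x = 0 → y ⬝ᵥ A *ᵥ y = 0 → x ⬝ᵥ A *ᵥ y ≠ 0 →
      x ⬝ᵥ B *ᵥ y = c * (x ⬝ᵥ A *ᵥ y) →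
      ∀ z, z ⬝ᵥ A *ᵥ z = 0 → y ⬝ᵥ B *ᵥ z = c * (y ⬝ᵥ A *ᵥ z) := by
    intro x y hx hy hxy hxyc z hz
    have key := mul_dotProduct_mulVec_eq_of_isotropic hA hB hAB hx hy hz
    rw [hxyc] at key
    exact mul_left_cancel₀ hxy (by linear_combination key)
  have hq_prop := propagate p q hp hq hpq hc
  have hp_prop := propagate q p hq hp (by rwa [hA.dotProduct_mulVec_comm])
    (by rwa [hA.dotProduct_mulVec_comm, hB.dotProduct_mulVec_comm])
  intro y z hy hz
  by_cases hpy : p ⬝ᵥ A *ᵥ y = 0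
  · by_cases hqy : q ⬝ᵥ A *ᵥ y = 0
    · have hyp : (y + p) ⬝ᵥ A *ᵥ (y + p) = 0 := by
        rw [hA.dotProduct_mulVec_add_add, hy, hp, hA.dotProduct_mulVec_comm, hpy]; ring
      have hqyp : q ⬝ᵥ A *ᵥ (y + p) ≠ 0 := by
        rwa [mulVec_add, dotProduct_add, hqy, zero_add, hA.dotProduct_mulVec_comm]
      have hypz := propagate q (y + p) hq hyp hqyp
        (by rw [mulVec_add, mulVec_add, dotProduct_add, dotProduct_add, hq_prop y hy,
          hq_prop p hp]; ring) z hz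
      simp only [add_dotProduct, hp_prop z hz] at hypz
      linear_combination hypz
    · exact propagate q y hq hy hqy (hq_prop y hy) z hz
  · exact propagate p y hp hy hpy (hp_prop y hy) z hz

end IsotropicCone

section Rows

variable {R ι κ : Type*} [CommRing R] [Fintype ι]

theorem Matrix.mul_mul_transpose_apply (V : Matrix κ ι R) (A : Matrix ι ι R) (i j : κ) :
    (V * A * Vᵀ) i j = V i ⬝ᵥ A *ᵥ V j := by
  rw [dotProduct_mulVec]; rfl

theorem Matrix.IsSymm.mul_mul_transpose {A : Matrix ι ι R} (hA : A.IsSymm) (V : Matrix κ ι R) :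
    (V * A * Vᵀ).IsSymm := by
  rw [IsSymm, transpose_mul, transpose_mul, transpose_transpose, hA.eq, Matrix.mul_assoc]

variable [DecidableEq ι]

theorem Matrix.sum_dotProduct_mulVec_eq_trace {V : Matrix ι ι R} (hV : V * Vᵀ = 1)
    (A : Matrix ι ι R) : ∑ i, V i ⬝ᵥ A *ᵥ V i = A.trace := by
  calc ∑ i, V i ⬝ᵥ A *ᵥ V i = (V * A * Vᵀ).trace := by
        simp only [trace, diag, mul_mul_transpose_apply]
    _ = A.trace := by rw [trace_mul_cycle, mul_eq_one_comm.1 hV, one_mul]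

theorem Matrix.eq_of_mul_mul_transpose_eq {V A B : Matrix ι ι R} (hV : V * Vᵀ = 1)
    (h : V * A * Vᵀ = V * B * Vᵀ) : A = B := by
  have hV' : Vᵀ * V = 1 := mul_eq_one_comm.1 hV
  have hconj : ∀ C : Matrix ι ι R, Vᵀ * (V * C * Vᵀ) * V = C := fun C => by
    simp only [Matrix.mul_assoc, hV', Matrix.mul_one, ← Matrix.mul_assoc Vᵀ, Matrix.one_mul]
  rw [← hconj A, h, hconj]

theorem Matrix.of_vecCons_mul_transpose_eq_one_iff {m n : ℕ} (u : Fin n → R)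
    (P : Fin m → Fin n → R) :
    of (vecCons u P) * (of (vecCons u P))ᵀ = 1 ↔
      u ⬝ᵥ u = 1 ∧ of P *ᵥ u = 0 ∧ of P * (of P)ᵀ = 1 := by
  have hrow : ∀ {k : ℕ} (V : Fin k → Fin n → R) i j, (of V * (of V)ᵀ) i j = V i ⬝ᵥ V j :=
    fun _ _ _ => rfl
  rw [← Matrix.ext_iff, ← Matrix.ext_iff, funext_iff]
  simp only [Fin.forall_fin_succ, hrow, cons_val_zero, cons_val_succ, one_apply, Fin.succ_inj,
    Fin.succ_ne_zero, (Fin.succ_ne_zero _).symm, if_true, if_false, mulVec, Pi.zero_apply,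
    of_apply, dotProduct_comm u (P _)]
  exact ⟨fun ⟨⟨h₁, h₂⟩, h₃⟩ => ⟨h₁, h₂, fun i => (h₃ i).2⟩,
    fun ⟨h₁, h₂, h₃⟩ => ⟨⟨h₁, h₂⟩, fun i => ⟨h₂ i, h₃ i⟩⟩⟩

end Rows

section Real

variable {ι : Type*} [Fintype ι]

theorem exists_smul_dotProduct_smul_eq_one {u : ι → ℝ} (hu : u ≠ 0) :
    ∃ r : ℝ, r ≠ 0 ∧ (r • u) ⬝ᵥ (r • u) = 1 := by
  have hpos : 0 < u ⬝ᵥ u :=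
    lt_of_le_of_ne (Finset.sum_nonneg fun i _ => mul_self_nonneg (u i))
      (Ne.symm (dotProduct_self_eq_zero.not.2 hu))
  refine ⟨(√(u ⬝ᵥ u))⁻¹, by positivity, ?_⟩
  rw [smul_dotProduct, dotProduct_smul, smul_eq_mul, smul_eq_mul, ← mul_assoc, ← mul_inv,
    Real.mul_self_sqrt hpos.le, inv_mul_cancel₀ hpos.ne']

theorem Matrix.smul_dotProduct_mulVec_smul (A : Matrix ι ι ℝ) (r : ℝ) (u : ι → ℝ) :
    (r • u) ⬝ᵥ A *ᵥ (r • u) = r ^ 2 * (u ⬝ᵥ A *ᵥ u) := by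
  rw [mulVec_smul, smul_dotProduct, dotProduct_smul, smul_eq_mul, smul_eq_mul]; ring

variable {A : Matrix ι ι ℝ}

theorem Matrix.IsSymm.exists_smul_add_isotropic (hA : A.IsSymm) {x y : ι → ℝ}
    (hx : 0 < x ⬝ᵥ A *ᵥ x) (hy : y ⬝ᵥ A *ᵥ y ≤ 0) :
    ∃ t : ℝ, (t • x + y) ⬝ᵥ A *ᵥ (t • x + y) = 0 := by
  have hdisc : 0 ≤ discrim (x ⬝ᵥ A *ᵥ x) (2 * (x ⬝ᵥ A *ᵥ y)) (y ⬝ᵥ A *ᵥ y) := by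
    rw [discrim]; nlinarith [sq_nonneg (x ⬝ᵥ A *ᵥ y)]
  obtain ⟨t, ht⟩ := exists_quadratic_eq_zero hx.ne' ⟨_, (Real.mul_self_sqrt hdisc).symm⟩
  refine ⟨t, ?_⟩
  rw [hA.dotProduct_mulVec_add_add, smul_dotProduct_mulVec_smul, smul_dotProduct]
  linear_combination ht

theorem Matrix.IsSymm.exists_unit_isotropic [Nonempty ι] [DecidableEq ι] (hA : A.IsSymm)
    (htr : A.trace = 0) : ∃ u : ι → ℝ, u ⬝ᵥ u = 1 ∧ u ⬝ᵥ A *ᵥ u = 0 := by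
  have hsingle : ∀ i j, Pi.single i 1 ⬝ᵥ A *ᵥ Pi.single j 1 = A i j := fun i j => by simp
  suffices ∃ x ≠ 0, x ⬝ᵥ A *ᵥ x = 0 by
    obtain ⟨x, hx0, hx⟩ := this
    obtain ⟨r, -, hrx⟩ := exists_smul_dotProduct_smul_eq_one hx0
    exact ⟨r • x, hrx, by rw [smul_dotProduct_mulVec_smul, hx, mul_zero]⟩
  by_cases hpos : ∃ i, 0 < A i i
  · obtain ⟨i, hi⟩ := hpos
    obtain ⟨j, hj⟩ : ∃ j, A j j < 0 := by
      by_contra! hnonneg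
      exact (Finset.sum_pos' (fun j _ => hnonneg j) ⟨i, Finset.mem_univ _, hi⟩).ne' htr
    have hij : i ≠ j := by rintro rfl; linarith
    obtain ⟨t, ht⟩ := hA.exists_smul_add_isotropic (x := Pi.single i 1) (y := Pi.single j 1)
      (by rwa [hsingle]) (by rw [hsingle]; exact hj.le)
    refine ⟨t • Pi.single i 1 + Pi.single j 1, fun h0 => ?_, ht⟩
    simpa [hij] using congr_fun h0 j
  · push Not at hpos
    obtain ⟨i⟩ := ‹Nonempty ι›
    refine ⟨Pi.single i 1, by simp, ?_⟩
    rw [hsingle]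
    exact (Finset.sum_eq_zero_iff_of_nonpos fun j _ => hpos j).1 htr i (Finset.mem_univ i)

end Real

theorem exists_of_vecCons_mul_transpose_eq_one {m : ℕ} {u : Fin (m + 1) → ℝ} (hu : u ⬝ᵥ u = 1) :
    ∃ P : Fin m → Fin (m + 1) → ℝ, of (vecCons u P) * (of (vecCons u P))ᵀ = 1 := by
  have hunit :
      Orthonormal ℝ (({0} : Set (Fin (m + 1))).domRestrict fun _ => WithLp.toLp 2 u) := by
    rw [orthonormal_iff_ite]
    rintro ⟨i, rfl⟩ ⟨j, rfl⟩
    simp only [Set.domRestrict_apply, if_true, EuclideanSpace.inner_toLp_toLp, star_trivial, hu]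
  obtain ⟨b, hb⟩ := hunit.exists_orthonormalBasis_extension_of_card_eq (by simp)
  refine ⟨fun i => (b i.succ).ofLp, ?_⟩
  have hW : vecCons u (fun i => (b i.succ).ofLp) = fun i => (b i).ofLp := by
    ext i : 1
    refine Fin.cases ?_ (fun i => ?_) i
    · simp [hb 0 rfl]
    · simp
  ext i j
  rw [hW]
  change (b i).ofLp ⬝ᵥ (b j).ofLp = _
  rw [one_apply, ← orthonormal_iff_ite.1 b.orthonormal i j,
    EuclideanSpace.inner_eq_star_dotProduct, star_trivial, dotProduct_comm]

theorem exists_vecCons_orthonormal_isotropic {m : ℕ}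
    (ih : ∀ M : Matrix (Fin m) (Fin m) ℝ, M.IsSymm → M.trace = 0 →
      ∃ V : Matrix (Fin m) (Fin m) ℝ, V * Vᵀ = 1 ∧ ∀ i, V i ⬝ᵥ M *ᵥ V i = 0)
    {A : Matrix (Fin (m + 1)) (Fin (m + 1)) ℝ} (hA : A.IsSymm) (htr : A.trace = 0)
    {u : Fin (m + 1) → ℝ} (hu : u ⬝ᵥ u = 1) (hAu : u ⬝ᵥ A *ᵥ u = 0) :
    ∃ P : Fin m → Fin (m + 1) → ℝ,
      of (vecCons u P) * (of (vecCons u P))ᵀ = 1 ∧ ∀ i, P i ⬝ᵥ A *ᵥ P i = 0 := by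
  obtain ⟨P, hW⟩ := exists_of_vecCons_mul_transpose_eq_one hu
  obtain ⟨-, hPu, hPP⟩ := (of_vecCons_mul_transpose_eq_one_iff u P).1 hW
  have hMtr : (of P * A * (of P)ᵀ).trace = 0 := by
    have hsum := sum_dotProduct_mulVec_eq_trace hW A
    rw [Fin.sum_univ_succ, htr] at hsum
    change u ⬝ᵥ A *ᵥ u + ∑ i, P i ⬝ᵥ A *ᵥ P i = 0 at hsum
    rw [hAu, zero_add] at hsum
    simp only [trace, diag, mul_mul_transpose_apply]
    exact hsum
  obtain ⟨V, hV, hVM⟩ := ih _ (hA.mul_mul_transpose _) hMtr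
  refine ⟨fun i => V i ᵥ* of P,
    (of_vecCons_mul_transpose_eq_one_iff _ _).2 ⟨hu, ?_, ?_⟩, fun i => ?_⟩
  · change (V * of P) *ᵥ u = 0
    rw [← mulVec_mulVec, hPu, mulVec_zero]
  · change (V * of P) * (V * of P)ᵀ = 1
    rw [transpose_mul, Matrix.mul_assoc, ← Matrix.mul_assoc (of P), hPP, Matrix.one_mul, hV]
  · calc (V * of P) i ⬝ᵥ A *ᵥ (V * of P) i = (V * of P * A * (V * of P)ᵀ) i i :=
          (mul_mul_transpose_apply ..).symm
      _ = (V * (of P * A * (of P)ᵀ) * Vᵀ) i i := by simp only [transpose_mul, Matrix.mul_assoc]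
      _ = 0 := by rw [mul_mul_transpose_apply, hVM]

theorem Matrix.IsSymm.exists_orthonormal_isotropic_rows {n : ℕ}
    {A : Matrix (Fin n) (Fin n) ℝ} (hA : A.IsSymm) (htr : A.trace = 0) :
    ∃ V : Matrix (Fin n) (Fin n) ℝ, V * Vᵀ = 1 ∧ ∀ i, V i ⬝ᵥ A *ᵥ V i = 0 := by
  induction n with
  | zero => exact ⟨1, Subsingleton.elim _ _, finZeroElim⟩
  | succ m ih =>
    obtain ⟨u, hu, hAu⟩ := hA.exists_unit_isotropic htr
    obtain ⟨P, hW, hP⟩ :=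
      exists_vecCons_orthonormal_isotropic (fun _ hM hMtr => ih hM hMtr) hA htr hu hAu
    exact ⟨of (vecCons u P), hW, Fin.cases hAu hP⟩

theorem dotProduct_mulVec_eq_zero_of_nonpos_imp_nonpos {n : ℕ}
    {A B : Matrix (Fin n) (Fin n) ℝ} (hA : A.IsSymm) (htrA : A.trace = 0) (htrB : B.trace = 0)
    (h : ∀ x, x ⬝ᵥ A *ᵥ x ≤ 0 → x ⬝ᵥ B *ᵥ x ≤ 0) {u : Fin n → ℝ} (hAu : u ⬝ᵥ A *ᵥ u = 0) :
    u ⬝ᵥ B *ᵥ u = 0 := by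
  rcases eq_or_ne u 0 with rfl | hu0
  · simp
  obtain ⟨r, hr, hru⟩ := exists_smul_dotProduct_smul_eq_one hu0
  obtain ⟨m, rfl⟩ : ∃ m, n = m + 1 :=
    Nat.exists_eq_succ_of_ne_zero (by rintro rfl; exact hu0 (Subsingleton.elim _ _))
  have hAru : (r • u) ⬝ᵥ A *ᵥ (r • u) = 0 := by rw [smul_dotProduct_mulVec_smul, hAu, mul_zero]
  obtain ⟨P, hW, hP⟩ := exists_vecCons_orthonormal_isotropic
    (fun _ hM hMtr => hM.exists_orthonormal_isotropic_rows hMtr) hA htrA hru hAru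
  have hsum := sum_dotProduct_mulVec_eq_trace hW B
  rw [Fin.sum_univ_succ, htrB] at hsum
  change (r • u) ⬝ᵥ B *ᵥ (r • u) + ∑ i, P i ⬝ᵥ B *ᵥ P i = 0 at hsum
  have hrest := Finset.sum_nonpos fun i (_ : i ∈ Finset.univ) => h (P i) (hP i).le
  have hBru := h _ hAru.le
  rw [smul_dotProduct_mulVec_smul] at hBru hsum
  have : r ^ 2 * (u ⬝ᵥ B *ᵥ u) = 0 := by linarith
  exact (mul_eq_zero.1 this).resolve_left (pow_ne_zero 2 hr)

theorem traceless_cone_inclusion_implies_proportional {n : ℕ}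
    (A B : Matrix (Fin n) (Fin n) ℝ) (hA : A.IsSymm) (hB : B.IsSymm)
    (htrA : A.trace = 0) (htrB : B.trace = 0)
    (h : {x : Fin n → ℝ | x ⬝ᵥ A.mulVec x ≤ 0} ⊆ {x : Fin n → ℝ | x ⬝ᵥ B.mulVec x ≤ 0}) :
    ∃ c : ℝ, B = c • A := by
  have hAB : ∀ x, x ⬝ᵥ A *ᵥ x = 0 → x ⬝ᵥ B *ᵥ x = 0 := fun _ =>
    dotProduct_mulVec_eq_zero_of_nonpos_imp_nonpos hA htrA htrB fun _ hy => h hy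
  obtain ⟨c, hc⟩ := exists_dotProduct_mulVec_eq_mul_of_isotropic hA hB hAB
  obtain ⟨V, hV, hVA⟩ := hA.exists_orthonormal_isotropic_rows htrA
  refine ⟨c, eq_of_mul_mul_transpose_eq hV ?_⟩
  ext i j
  rw [Matrix.mul_smul, Matrix.smul_mul, Matrix.smul_apply, mul_mul_transpose_apply,
    mul_mul_transpose_apply, hc _ _ (hVA i) (hVA j), smul_eq_mul]
end

section
/- Let A, B be real symmetric positive semidefinite n×n matrices, each of rank at least 2. Define D := {x ∈ ℝⁿ : xᵀAx < 1} and E := {x ∈ ℝⁿ : xᵀBx < 1}. If at every point z with xᵀAx = 1 = xᵀBx the vectors Az and Bz are linearly dependent, and E ∩ D ≠ ∅, then either E ⊆ D or D ⊆ E. -/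
/-!
Let `β x y = xᵀ (A - B) y`. If `Q_A z = Q_B z > 0`, rescaling `z` puts it on both boundaries,
where `Az` and `Bz` are dependent and pair to `1` with `z`, hence are equal; for `Q_A z = 0`
positive semidefiniteness gives `Az = Bz = 0`. So every `β`-isotropic vector lies in the kernel
of `β`. Such a symmetric form is semidefinite: if `β u u < 0 < β v v`, the segment from `v` to `u`
contains an isotropic `z`, and expanding around `z` gives `β u u = (1 - t)² β w w` and
`β v v = t² β w w` with `w = u - v`, which cannot have opposite signs. The sign of `A - B` is
exactly one of the two inclusions.
-/

open Matrix

namespace LinearMap.BilinForm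

variable {V : Type*} [AddCommGroup V] [Module ℝ V] (β : LinearMap.BilinForm ℝ V)

theorem exists_apply_self_eq_zero_of_pos_of_neg {u v : V} (hu : 0 < β u u) (hv : β v v < 0) :
    ∃ t : ℝ, β (u + t • (v - u)) (u + t • (v - u)) = 0 := by
  have hexpand : ∀ t : ℝ, β (u + t • (v - u)) (u + t • (v - u)) =
      β u u + t * (β u (v - u) + β (v - u) u) + t ^ 2 * β (v - u) (v - u) := by
    intro t
    simp only [map_add, map_smul, LinearMap.add_apply, LinearMap.smul_apply, smul_eq_mul]
    ring
  have hcont : Continuous fun t : ℝ => β (u + t • (v - u)) (u + t • (v - u)) := by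
    simp only [hexpand]
    fun_prop
  obtain ⟨t, -, ht⟩ := intermediate_value_Icc' zero_le_one hcont.continuousOn
    ⟨by simpa using hv.le, by simpa using hu.le⟩
  exact ⟨t, ht⟩

variable {β}

theorem apply_add_smul_self_of_mem_ker (hβ : β.IsSymm) {z : V} (hz : β z = 0) (s : ℝ) (w : V) :
    β (z + s • w) (z + s • w) = s ^ 2 * β w w := by
  have hz' : β w z = 0 := by rw [hβ.eq, hz, LinearMap.zero_apply]
  simp only [map_add, map_smul, LinearMap.add_apply, LinearMap.smul_apply, smul_eq_mul, hz, hz',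
    LinearMap.zero_apply]
  ring

theorem forall_apply_self_nonneg_or_forall_apply_self_nonpos (hβ : β.IsSymm)
    (hker : ∀ z, β z z = 0 → β z = 0) : (∀ x, 0 ≤ β x x) ∨ ∀ x, β x x ≤ 0 := by
  by_contra! h
  obtain ⟨⟨u, hu⟩, v, hv⟩ := h
  obtain ⟨t, ht⟩ := β.exists_apply_self_eq_zero_of_pos_of_neg hv hu
  have hz : β (v + t • (u - v)) = 0 := hker _ ht
  have hv' := apply_add_smul_self_of_mem_ker hβ hz (-t) (u - v)
  have hu' := apply_add_smul_self_of_mem_ker hβ hz (1 - t) (u - v)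
  rw [show v + t • (u - v) + (-t) • (u - v) = v by module] at hv'
  rw [show v + t • (u - v) + (1 - t) • (u - v) = u by module] at hu'
  nlinarith [mul_neg_of_neg_of_pos hu hv, mul_self_nonneg (t * (1 - t) * β (u - v) (u - v))]

end LinearMap.BilinForm

theorem eq_of_not_linearIndependent_pair {K V : Type*} [Field K] [AddCommGroup V] [Module K V]
    (f : V →ₗ[K] K) {a b : V} (hab : f a = f b) (ha : f a ≠ 0)
    (h : ¬LinearIndependent K ![a, b]) : a = b := by
  obtain ⟨s, t, hst, hne⟩ : ∃ s t : K, s • a + t • b = 0 ∧ ¬(s = 0 ∧ t = 0) := by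
    simpa [LinearIndependent.pair_iff] using h
  have ht : t = -s := by
    have := congrArg f hst
    rw [map_add, map_smul, map_smul, ← hab, map_zero, smul_eq_mul, smul_eq_mul, ← add_mul] at this
    linear_combination (mul_eq_zero.mp this).resolve_right ha
  have hs : s ≠ 0 := fun hs => hne ⟨hs, by rw [ht, hs, neg_zero]⟩
  rw [ht, neg_smul, ← sub_eq_add_neg, ← smul_sub, smul_eq_zero] at hst
  exact sub_eq_zero.mp (hst.resolve_left hs)

namespace Matrix

variable {m : Type*} [Fintype m]

theorem dotProduct_mulVec_smul_self (M : Matrix m m ℝ) (c : ℝ) (z : m → ℝ) :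
    (c • z) ⬝ᵥ M *ᵥ (c • z) = c ^ 2 * (z ⬝ᵥ M *ᵥ z) := by
  rw [mulVec_smul, dotProduct_smul, smul_dotProduct, smul_eq_mul, smul_eq_mul]
  ring

theorem PosSemidef.mulVec_eq_of_dotProduct_mulVec_eq {A B : Matrix m m ℝ}
    (hA : A.PosSemidef) (hB : B.PosSemidef)
    (hdep : ∀ z, z ⬝ᵥ A *ᵥ z = 1 → z ⬝ᵥ B *ᵥ z = 1 → ¬LinearIndependent ℝ ![A *ᵥ z, B *ᵥ z])
    {z : m → ℝ} (hz : z ⬝ᵥ A *ᵥ z = z ⬝ᵥ B *ᵥ z) : A *ᵥ z = B *ᵥ z := by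
  rcases (hA.dotProduct_mulVec_nonneg z).eq_or_lt with hzero | hpos
  · simp only [star_trivial] at hzero
    rw [(hA.dotProduct_mulVec_zero_iff z).mp (by simpa using hzero.symm),
      (hB.dotProduct_mulVec_zero_iff z).mp (by simpa [← hz] using hzero.symm)]
  · simp only [star_trivial] at hpos
    set r := Real.sqrt (z ⬝ᵥ A *ᵥ z)
    have hr : r ≠ 0 := (Real.sqrt_pos.mpr hpos).ne'
    have hunit : ∀ M : Matrix m m ℝ, z ⬝ᵥ M *ᵥ z = z ⬝ᵥ A *ᵥ z →
        (r⁻¹ • z) ⬝ᵥ M *ᵥ (r⁻¹ • z) = 1 := by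
      intro M hM
      rw [dotProduct_mulVec_smul_self, hM, inv_pow, Real.sq_sqrt hpos.le, inv_mul_cancel₀ hpos.ne']
    have hAB := eq_of_not_linearIndependent_pair (dotProductBilin ℝ ℝ (r⁻¹ • z))
      (by rw [dotProductBilin_apply_apply, dotProductBilin_apply_apply, hunit A rfl,
        hunit B hz.symm])
      (by rw [dotProductBilin_apply_apply, hunit A rfl]; exact one_ne_zero)
      (hdep _ (hunit A rfl) (hunit B hz.symm))
    rw [mulVec_smul, mulVec_smul] at hAB
    exact smul_right_injective _ (inv_ne_zero hr) hAB

end Matrix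

theorem psd_unit_sublevel_no_transversal_general {n : ℕ} (A B : Matrix (Fin n) (Fin n) ℝ)
    (hA : A.PosSemidef) (hB : B.PosSemidef)
    (htrans : ∀ z : Fin n → ℝ, z ⬝ᵥ A.mulVec z = 1 → z ⬝ᵥ B.mulVec z = 1 →
      ¬ LinearIndependent ℝ ![A.mulVec z, B.mulVec z]) :
    {x : Fin n → ℝ | x ⬝ᵥ B.mulVec x < 1} ⊆ {x : Fin n → ℝ | x ⬝ᵥ A.mulVec x < 1} ∨
    {x : Fin n → ℝ | x ⬝ᵥ A.mulVec x < 1} ⊆ {x : Fin n → ℝ | x ⬝ᵥ B.mulVec x < 1} := by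
  set β := (A - B).toBilin'
  have hβ_apply : ∀ x y, β x y = x ⬝ᵥ A *ᵥ y - x ⬝ᵥ B *ᵥ y := fun x y => by
    rw [toBilin'_apply', sub_mulVec, dotProduct_sub]
  have hβ_symm : β.IsSymm :=
    isSymm_toBilin'_iff_isSymm.mpr <|
      (isHermitian_iff_isSymm.mp hA.1).sub (isHermitian_iff_isSymm.mp hB.1)
  have hβ_ker : ∀ z, β z z = 0 → β z = 0 := fun z hz => by
    have hAB := hA.mulVec_eq_of_dotProduct_mulVec_eq hB htrans
      (sub_eq_zero.mp ((hβ_apply z z).symm.trans hz))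
    refine LinearMap.ext fun w => ?_
    rw [LinearMap.zero_apply, hβ_symm.eq, hβ_apply, hAB, sub_self]
  rcases β.forall_apply_self_nonneg_or_forall_apply_self_nonpos hβ_symm hβ_ker with h | h
  · exact Or.inr fun x (hx : x ⬝ᵥ A *ᵥ x < 1) =>
      show x ⬝ᵥ B *ᵥ x < 1 by linarith [h x, hβ_apply x x]
  · exact Or.inl fun x (hx : x ⬝ᵥ B *ᵥ x < 1) =>
      show x ⬝ᵥ A *ᵥ x < 1 by linarith [h x, hβ_apply x x]

theorem psd_unit_sublevel_no_transversal {n : ℕ} (A B : Matrix (Fin n) (Fin n) ℝ)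
    (hA : A.PosSemidef) (hB : B.PosSemidef)
    (hrA : 2 ≤ A.rank) (hrB : 2 ≤ B.rank)
    (htrans : ∀ z : Fin n → ℝ, z ⬝ᵥ A.mulVec z = 1 → z ⬝ᵥ B.mulVec z = 1 →
      ¬ LinearIndependent ℝ ![A.mulVec z, B.mulVec z])
    (hint : ({x : Fin n → ℝ | x ⬝ᵥ B.mulVec x < 1} ∩
      {x : Fin n → ℝ | x ⬝ᵥ A.mulVec x < 1}).Nonempty) :
    {x : Fin n → ℝ | x ⬝ᵥ B.mulVec x < 1} ⊆ {x : Fin n → ℝ | x ⬝ᵥ A.mulVec x < 1} ∨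
    {x : Fin n → ℝ | x ⬝ᵥ A.mulVec x < 1} ⊆ {x : Fin n → ℝ | x ⬝ᵥ B.mulVec x < 1} :=
  psd_unit_sublevel_no_transversal_general A B hA hB htrans
end

section
/- Let A, B be real symmetric n×n matrices such that A is not positive semidefinite and not negative semidefinite, and suppose that the zero set {x ∈ ℝⁿ : xᵀAx = 0} is contained in {x ∈ ℝⁿ : xᵀBx = 0}. Then B = cA for some real constant c. -/
open Matrix

private lemma symm_swap {n : ℕ} (M : Matrix (Fin n) (Fin n) ℝ) (hM : M.IsSymm)
    (x y : Fin n → ℝ) : x ⬝ᵥ M.mulVec y = y ⬝ᵥ M.mulVec x := by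
  rw [Matrix.dotProduct_mulVec, ← Matrix.mulVec_transpose, hM.eq, dotProduct_comm]

private lemma bil_expand {n : ℕ} (M : Matrix (Fin n) (Fin n) ℝ) (x y : Fin n → ℝ) (s t : ℝ) :
    (s • x + t • y) ⬝ᵥ M.mulVec (s • x + t • y) =
      s ^ 2 * (x ⬝ᵥ M.mulVec x) + s * t * (x ⬝ᵥ M.mulVec y)
        + s * t * (y ⬝ᵥ M.mulVec x) + t ^ 2 * (y ⬝ᵥ M.mulVec y) := by
  simp [Matrix.mulVec_add, Matrix.mulVec_smul, add_dotProduct, dotProduct_add,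
    smul_dotProduct, dotProduct_smul, smul_eq_mul]
  ring

private lemma quad_zero {n : ℕ} (M : Matrix (Fin n) (Fin n) ℝ) (hM : M.IsSymm)
    (h0 : ∀ x : Fin n → ℝ, x ⬝ᵥ M.mulVec x = 0) : M = 0 := by
  have key : ∀ i j : Fin n, (Pi.single i 1 : Fin n → ℝ) ⬝ᵥ M.mulVec (Pi.single j 1) = M i j := by
    intro i j
    simp [Matrix.mulVec_single, single_dotProduct]
  ext i j
  have h1 := h0 (Pi.single i 1 + Pi.single j 1)
  have h2 : ((1:ℝ) • (Pi.single i 1 : Fin n → ℝ) + (1:ℝ) • (Pi.single j 1 : Fin n → ℝ)) ⬝ᵥ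
      M.mulVec ((1:ℝ) • (Pi.single i 1 : Fin n → ℝ) + (1:ℝ) • (Pi.single j 1 : Fin n → ℝ)) = 0 := by
    simpa using h1
  rw [bil_expand] at h2
  have hii := h0 (Pi.single i 1)
  have hjj := h0 (Pi.single j 1)
  have hji : (Pi.single j 1 : Fin n → ℝ) ⬝ᵥ M.mulVec (Pi.single i 1) = M i j := by
    rw [symm_swap M hM, key]
  rw [key i i, key i j, hji, key j j] at h2
  have hii' : M i i = 0 := by rw [← key i i]; exact hii
  have hjj' : M j j = 0 := by rw [← key j j]; exact hjj
  simp only [Matrix.zero_apply]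
  linarith

private lemma key_lemma {n : ℕ} (A B : Matrix (Fin n) (Fin n) ℝ)
    (hA : A.IsSymm) (hB : B.IsSymm)
    (h : {x : Fin n → ℝ | x ⬝ᵥ A.mulVec x = 0} ⊆ {x : Fin n → ℝ | x ⬝ᵥ B.mulVec x = 0})
    (x y : Fin n → ℝ) (hx : 0 < x ⬝ᵥ A.mulVec x) (hy : y ⬝ᵥ A.mulVec y < 0) :
    (y ⬝ᵥ A.mulVec y) * (x ⬝ᵥ B.mulVec x) = (x ⬝ᵥ A.mulVec x) * (y ⬝ᵥ B.mulVec y) := by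
  set ax := x ⬝ᵥ A.mulVec x with hax
  set ay := y ⬝ᵥ A.mulVec y with hay
  set α := x ⬝ᵥ A.mulVec y with hα
  set bx := x ⬝ᵥ B.mulVec x with hbx
  set by' := y ⬝ᵥ B.mulVec y with hby'
  set β := x ⬝ᵥ B.mulVec y with hβ
  have hAyx : y ⬝ᵥ A.mulVec x = α := (symm_swap A hA x y).symm
  have hByx : y ⬝ᵥ B.mulVec x = β := (symm_swap B hB x y).symm
  have hDpos : 0 < α ^ 2 - ax * ay := by nlinarith
  set d := Real.sqrt (α ^ 2 - ax * ay) with hd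
  have hd2 : d ^ 2 = α ^ 2 - ax * ay := Real.sq_sqrt (le_of_lt hDpos)
  have hdpos : 0 < d := Real.sqrt_pos.mpr hDpos
  have ha1 : (ay • x + (-α + d) • y) ⬝ᵥ A.mulVec (ay • x + (-α + d) • y) = 0 := by
    rw [bil_expand, hAyx, ← hax, ← hay, ← hα]
    linear_combination ay * hd2
  have ha2 : (ay • x + (-α - d) • y) ⬝ᵥ A.mulVec (ay • x + (-α - d) • y) = 0 := by
    rw [bil_expand, hAyx, ← hax, ← hay, ← hα]
    linear_combination ay * hd2
  have hb1 := h ha1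
  have hb2 := h ha2
  simp only [Set.mem_setOf_eq] at hb1 hb2
  rw [bil_expand, hByx, ← hbx, ← hby', ← hβ] at hb1 hb2
  have h5 : d * (ay * β - α * by') = 0 := by linear_combination (hb1 - hb2) / 4
  have hβeq : ay * β = α * by' := by
    rcases mul_eq_zero.mp h5 with h' | h'
    · exact absurd h' (ne_of_gt hdpos)
    · linarith
  have h6 : ay * (ay * bx - ax * by') = 0 := by
    linear_combination (hb1 + hb2) / 2 - by' * hd2 + 2 * α * hβeq
  have hayne : ay ≠ 0 := ne_of_lt hy
  rcases mul_eq_zero.mp h6 with h' | h'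
  · exact absurd h' hayne
  · linarith

theorem zero_set_inclusion_indefinite {n : ℕ}
    (A B : Matrix (Fin n) (Fin n) ℝ) (hA : A.IsSymm) (hB : B.IsSymm)
    (hpos : ¬ ∀ x : Fin n → ℝ, 0 ≤ x ⬝ᵥ A.mulVec x)
    (hneg : ¬ ∀ x : Fin n → ℝ, x ⬝ᵥ A.mulVec x ≤ 0)
    (h : {x : Fin n → ℝ | x ⬝ᵥ A.mulVec x = 0} ⊆ {x : Fin n → ℝ | x ⬝ᵥ B.mulVec x = 0}) :
    ∃ c : ℝ, B = c • A := by
  push_neg at hpos hneg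
  obtain ⟨q, hq⟩ := hpos
  obtain ⟨p, hp⟩ := hneg
  have hq' : q ⬝ᵥ A.mulVec q < 0 := hq
  have hp' : 0 < p ⬝ᵥ A.mulVec p := hp
  have hqne : q ⬝ᵥ A.mulVec q ≠ 0 := ne_of_lt hq'
  have hpne : p ⬝ᵥ A.mulVec p ≠ 0 := ne_of_gt hp'
  set c := (q ⬝ᵥ B.mulVec q) / (q ⬝ᵥ A.mulVec q) with hc
  have hall : ∀ x : Fin n → ℝ, x ⬝ᵥ B.mulVec x = c * (x ⬝ᵥ A.mulVec x) := by
    intro x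
    rcases lt_trichotomy (x ⬝ᵥ A.mulVec x) 0 with hx | hx | hx
    · have h1 := key_lemma A B hA hB h p x hp' hx
      have h2 := key_lemma A B hA hB h p q hp' hq'
      have hxne : x ⬝ᵥ A.mulVec x ≠ 0 := ne_of_lt hx
      rw [hc]
      field_simp
      nlinarith [h1, h2]
    · have hbx : x ⬝ᵥ B.mulVec x = 0 := h hx
      rw [hbx, hx, mul_zero]
    · have h1 := key_lemma A B hA hB h x q hx hq'
      rw [hc]
      field_simp
      linarith [h1]
  have hMs : (B - c • A).IsSymm := by
    unfold Matrix.IsSymm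
    rw [transpose_sub, transpose_smul, hA.eq, hB.eq]
  have hM0 : ∀ x : Fin n → ℝ, x ⬝ᵥ (B - c • A).mulVec x = 0 := by
    intro x
    rw [Matrix.sub_mulVec, dotProduct_sub, Matrix.smul_mulVec, dotProduct_smul,
      smul_eq_mul, hall x]
    ring
  have := quad_zero (B - c • A) hMs hM0
  exact ⟨c, by rwa [sub_eq_zero] at this⟩
end

section
/- Let A be a linear map from ℝⁿ to ℝⁿ and T an injective linear map from ℝ^(n-m) to ℝⁿ. Then rank(Tᵀ A T) ≥ rank(A) − 2m. -/
open Matrix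

/-- Key lemma: rank B ≤ rank (C * B) + nullity of C. -/
private lemma rank_le_rank_mul_add {p q n : ℕ}
    (C : Matrix (Fin q) (Fin n) ℝ) (B : Matrix (Fin n) (Fin p) ℝ) :
    B.rank ≤ (C * B).rank + (n - C.rank) := by
  classical
  set f := C.mulVecLin with hf
  set S := LinearMap.range B.mulVecLin with hS
  have h1 : (C * B).rank = Module.finrank ℝ (S.map f) := by
    rw [Matrix.rank, mulVecLin_mul, LinearMap.range_comp]
  have h2 : Module.finrank ℝ (S.map f)
      + Module.finrank ℝ (LinearMap.ker (f.domRestrict S)) = Module.finrank ℝ S := by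
    have := LinearMap.finrank_range_add_finrank_ker (f.domRestrict S)
    rwa [LinearMap.range_domRestrict] at this
  have h3 : Module.finrank ℝ (LinearMap.ker (f.domRestrict S))
      ≤ Module.finrank ℝ (LinearMap.ker f) := by
    rw [LinearMap.ker_domRestrict]
    have heq : Module.finrank ℝ (Submodule.comap S.subtype (LinearMap.ker f))
        = Module.finrank ℝ ((Submodule.comap S.subtype (LinearMap.ker f)).map S.subtype) :=
      (Submodule.equivMapOfInjective _ S.injective_subtype _).finrank_eq
    rw [heq]
    exact Submodule.finrank_mono (Submodule.map_comap_le _ _)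
  have h4 : C.rank + Module.finrank ℝ (LinearMap.ker f) = n := by
    have := LinearMap.finrank_range_add_finrank_ker f
    simpa [Matrix.rank, Module.finrank_fintype_fun_eq_card] using this
  have h5 : Module.finrank ℝ (LinearMap.ker f) = n - C.rank := by omega
  have hB : B.rank = Module.finrank ℝ S := rfl
  omega

theorem rank_conjugation_lower_bound {n m : ℕ}
    (A : Matrix (Fin n) (Fin n) ℝ) (T : Matrix (Fin n) (Fin (n - m)) ℝ)
    (hT : Function.Injective T.mulVec) :
    A.rank - 2 * m ≤ (Tᵀ * A * T).rank := by
  have hTrank : T.rank = n - m := by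
    rw [Matrix.rank]
    have : Function.Injective T.mulVecLin := hT
    rw [LinearMap.finrank_range_of_inj this, Module.finrank_fintype_fun_eq_card,
      Fintype.card_fin]
  -- Step 1: rank T ≤ rank (A * T) + (n - rank A)
  have h1 := rank_le_rank_mul_add A T
  -- Step 2: rank (A * T) ≤ rank (Tᵀ * (A * T)) + (n - rank Tᵀ)
  have h2 := rank_le_rank_mul_add Tᵀ (A * T)
  have hTT : Tᵀ.rank = n - m := by rw [Matrix.rank_transpose, hTrank]
  have hAle : A.rank ≤ n := A.rank_le_card_width.trans (by simp)
  have hmul : Tᵀ * (A * T) = Tᵀ * A * T := by rw [Matrix.mul_assoc]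
  rw [hmul] at h2
  rw [hTrank] at h1
  rw [hTT] at h2
  omega
end

section
/- Let A, B be symmetric linear maps on ℝⁿ, let I ⊆ ℝ be a nonempty open interval, E : I → L(ℝ^(n-m), ℝⁿ) a differentiable map with E(t) injective for every t ∈ I, and μ : I → ℝ a differentiable function such that E(t)ᵀ B E(t) = μ(t) · E(t)ᵀ A E(t) for all t ∈ I. If rank(A) > 4m, then μ is constant. -/
/-!
If `μ' t ≠ 0` at some `t`, put `C = B - μ t • A`; then `Eᵀ C E = (μ - μ t) • Eᵀ A E` near `t`.
Differentiating the bilinear forms at `t` on vectors `x, y ∈ ker (C E(t))` kills the left side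
(`C` is symmetric), leaving `μ' t * ⟪E x, A E y⟫ = 0`. So `U = E(t) (ker (C E(t)))` is isotropic
for `A`. As `range (C E(t)) ⊆ ker E(t)ᵀ` has dimension at most `m`, `dim U ≥ n - 2m`, and an
isotropic subspace forces `rank A ≤ 2 (n - dim U) ≤ 4m`, since `A U ⊆ U⊥`.
-/

open Matrix Module Filter Topology

theorem LinearMap.finrank_range_le_of_isotropic {𝕜 V : Type*} [RCLike 𝕜] [NormedAddCommGroup V]
    [InnerProductSpace 𝕜 V] [FiniteDimensional 𝕜 V] (f : V →ₗ[𝕜] V) (U : Submodule 𝕜 V)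
    (hU : ∀ u ∈ U, ∀ v ∈ U, inner 𝕜 u (f v) = 0) :
    finrank 𝕜 (range f) ≤ 2 * (finrank 𝕜 V - finrank 𝕜 U) := by
  have hfU : U.map f ≤ Uᗮ := by
    rintro - ⟨v, hv, rfl⟩
    exact (Submodule.mem_orthogonal U _).2 fun u hu => hU u hu v hv
  have hrange : range f = U.map f ⊔ Uᗮ.map f := by
    rw [range_eq_map, ← U.sup_orthogonal_of_hasOrthogonalProjection, Submodule.map_sup]
  have hcompl := U.finrank_add_finrank_orthogonal
  calc finrank 𝕜 (range f) ≤ finrank 𝕜 (U.map f) + finrank 𝕜 (Uᗮ.map f) := by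
        rw [hrange]; exact Submodule.finrank_add_le_finrank_add_finrank _ _
    _ ≤ finrank 𝕜 Uᗮ + finrank 𝕜 Uᗮ :=
        add_le_add (Submodule.finrank_mono hfU) (Submodule.finrank_map_le f Uᗮ)
    _ = 2 * (finrank 𝕜 V - finrank 𝕜 U) := by omega

theorem Matrix.rank_le_of_isotropic {ι : Type*} [Fintype ι] [DecidableEq ι] (A : Matrix ι ι ℝ)
    (U : Submodule ℝ (ι → ℝ)) (hU : ∀ u ∈ U, ∀ v ∈ U, u ⬝ᵥ A *ᵥ v = 0) :
    A.rank ≤ 2 * (Fintype.card ι - finrank ℝ U) := by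
  let e : (ι → ℝ) ≃ₗ[ℝ] EuclideanSpace ℝ ι := (WithLp.linearEquiv 2 ℝ (ι → ℝ)).symm
  have hrank : A.rank = finrank ℝ (LinearMap.range (toEuclideanLin A)) := by
    rw [toEuclideanLin_eq_toLin_orthonormal, ← rank_eq_finrank_range_toLin]
  have := (toEuclideanLin A).finrank_range_le_of_isotropic (U.map e.toLinearMap) <| by
    rintro - ⟨u, hu, rfl⟩ - ⟨v, hv, rfl⟩
    simpa [e, EuclideanSpace.inner_toLp_toLp, dotProduct_comm] using hU u hu v hv
  simpa [hrank, e.finrank_map_eq] using this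

theorem Matrix.rank_le_four_mul_of_isotropic_ker {ι κ : Type*} [Fintype ι] [Fintype κ]
    [DecidableEq ι] (A : Matrix ι ι ℝ) (E F : Matrix ι κ ℝ) (hE : Function.Injective E.mulVec)
    (hEF : Eᵀ * F = 0)
    (hiso : ∀ x ∈ LinearMap.ker F.mulVecLin, ∀ y ∈ LinearMap.ker F.mulVecLin,
      (E *ᵥ x) ⬝ᵥ A *ᵥ (E *ᵥ y) = 0) :
    A.rank ≤ 4 * (Fintype.card ι - Fintype.card κ) := by
  have hrankE : E.rank = Fintype.card κ := by
    rw [rank, LinearMap.finrank_range_of_inj hE, finrank_fintype_fun_eq_card]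
  have hsum : Eᵀ.rank + F.rank ≤ Fintype.card ι := rank_add_rank_le_card_of_mul_eq_zero hEF
  have hnullity : F.rank + finrank ℝ (LinearMap.ker F.mulVecLin) = Fintype.card κ := by
    rw [rank, LinearMap.finrank_range_add_finrank_ker, finrank_fintype_fun_eq_card]
  have hU : finrank ℝ ((LinearMap.ker F.mulVecLin).map E.mulVecLin)
      = finrank ℝ (LinearMap.ker F.mulVecLin) :=
    (Submodule.equivMapOfInjective _ hE _).finrank_eq.symm
  have := A.rank_le_of_isotropic ((LinearMap.ker F.mulVecLin).map E.mulVecLin) <| by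
    rintro - ⟨x, hx, rfl⟩ - ⟨y, hy, rfl⟩
    exact hiso x hx y hy
  rw [rank_transpose] at hsum
  omega

section Calculus

variable {𝕜 ι κ : Type*} [NontriviallyNormedField 𝕜] {t : 𝕜}

theorem HasDerivAt.dotProduct [Fintype ι] {u v : 𝕜 → ι → 𝕜} {u' v' : ι → 𝕜}
    (hu : ∀ i, HasDerivAt (fun s => u s i) (u' i) t)
    (hv : ∀ i, HasDerivAt (fun s => v s i) (v' i) t) :
    HasDerivAt (fun s => u s ⬝ᵥ v s) (u' ⬝ᵥ v t + u t ⬝ᵥ v') t := by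
  have := HasDerivAt.fun_sum fun i (_ : i ∈ Finset.univ) => (hu i).fun_mul (hv i)
  simpa only [_root_.dotProduct, Finset.sum_add_distrib] using this

theorem HasDerivAt.mulVec [Fintype κ] {M : 𝕜 → Matrix ι κ 𝕜} {M' : Matrix ι κ 𝕜}
    {u : 𝕜 → κ → 𝕜} {u' : κ → 𝕜} (hM : ∀ i j, HasDerivAt (fun s => M s i j) (M' i j) t)
    (hu : ∀ j, HasDerivAt (fun s => u s j) (u' j) t) (i : ι) :
    HasDerivAt (fun s => (M s *ᵥ u s) i) ((M' *ᵥ u t + M t *ᵥ u') i) t :=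
  HasDerivAt.dotProduct (hM i) hu

theorem hasDerivAt_dotProduct_mulVec_mulVec [Fintype ι] [Fintype κ] {E : 𝕜 → Matrix ι κ 𝕜}
    {E' : Matrix ι κ 𝕜} (hE : ∀ i j, HasDerivAt (fun s => E s i j) (E' i j) t)
    (M : Matrix ι ι 𝕜) (x y : κ → 𝕜) :
    HasDerivAt (fun s => (E s *ᵥ x) ⬝ᵥ M *ᵥ (E s *ᵥ y))
      ((E' *ᵥ x) ⬝ᵥ M *ᵥ (E t *ᵥ y) + (E t *ᵥ x) ⬝ᵥ M *ᵥ (E' *ᵥ y)) t := by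
  have hEx := HasDerivAt.mulVec (u' := 0) hE fun j => hasDerivAt_const t (x j)
  have hEy := HasDerivAt.mulVec (u' := 0) hE fun j => hasDerivAt_const t (y j)
  have hMEy := HasDerivAt.mulVec (M' := 0) (u := fun s => E s *ᵥ y)
    (fun i j => hasDerivAt_const t (M i j)) hEy
  simpa using HasDerivAt.dotProduct hEx hMEy

end Calculus

section Pencil

variable {ι κ : Type*} [Fintype ι] [Fintype κ] {A B : Matrix ι ι ℝ} {E : ℝ → Matrix ι κ ℝ}
  {E' : Matrix ι κ ℝ} {μ : ℝ → ℝ} {μ' t : ℝ}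

theorem dotProduct_transpose_mul_mul_mulVec (M : Matrix ι ι ℝ) (F : Matrix ι κ ℝ) (x y : κ → ℝ) :
    x ⬝ᵥ (Fᵀ * M * F) *ᵥ y = (F *ᵥ x) ⬝ᵥ M *ᵥ (F *ᵥ y) := by
  rw [Matrix.mul_assoc, ← mulVec_mulVec, dotProduct_mulVec, vecMul_transpose, ← mulVec_mulVec]

theorem dotProduct_mulVec_eq_zero_of_deriv_ne_zero (hA : A.IsSymm) (hB : B.IsSymm)
    (hE : ∀ i j, HasDerivAt (fun s => E s i j) (E' i j) t) (hμ : HasDerivAt μ μ' t) (hμ' : μ' ≠ 0)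
    (heq : ∀ᶠ s in 𝓝 t, (E s)ᵀ * B * E s = μ s • ((E s)ᵀ * A * E s)) {x y : κ → ℝ}
    (hx : ((B - μ t • A) * E t) *ᵥ x = 0) (hy : ((B - μ t • A) * E t) *ᵥ y = 0) :
    (E t *ᵥ x) ⬝ᵥ A *ᵥ (E t *ᵥ y) = 0 := by
  set C := B - μ t • A
  have hC : Cᵀ = C := by rw [transpose_sub, transpose_smul, hA.eq, hB.eq]
  have hform_C : ∀ s, (E s *ᵥ x) ⬝ᵥ C *ᵥ (E s *ᵥ y)
      = (E s *ᵥ x) ⬝ᵥ B *ᵥ (E s *ᵥ y) - μ t * (E s *ᵥ x) ⬝ᵥ A *ᵥ (E s *ᵥ y) := fun s => by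
    rw [sub_mulVec, smul_mulVec, dotProduct_sub, dotProduct_smul, smul_eq_mul]
  have hderiv_C : HasDerivAt (fun s => (E s *ᵥ x) ⬝ᵥ C *ᵥ (E s *ᵥ y)) 0 t := by
    have h := hasDerivAt_dotProduct_mulVec_mulVec hE C x y
    rwa [mulVec_mulVec, hy, dotProduct_zero, dotProduct_mulVec, ← mulVec_transpose, hC,
      mulVec_mulVec, hx, zero_dotProduct, add_zero] at h
  have hform_eq : (fun s => (E s *ᵥ x) ⬝ᵥ C *ᵥ (E s *ᵥ y))
      =ᶠ[𝓝 t] fun s => (μ s - μ t) * (E s *ᵥ x) ⬝ᵥ A *ᵥ (E s *ᵥ y) := by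
    filter_upwards [heq] with s hs
    rw [hform_C, ← dotProduct_transpose_mul_mul_mulVec B, hs, smul_mulVec, dotProduct_smul,
      smul_eq_mul, dotProduct_transpose_mul_mul_mulVec]
    ring
  have hderiv_A := ((hμ.sub_const (μ t)).mul
    (hasDerivAt_dotProduct_mulVec_mulVec hE A x y)).congr_of_eventuallyEq hform_eq
  have := hderiv_C.unique hderiv_A
  simp only [sub_self, zero_mul, add_zero] at this
  exact (mul_eq_zero.1 this.symm).resolve_left hμ'

theorem rank_le_of_deriv_ne_zero [DecidableEq ι] (hA : A.IsSymm) (hB : B.IsSymm)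
    (hE : ∀ i j, HasDerivAt (fun s => E s i j) (E' i j) t) (hμ : HasDerivAt μ μ' t) (hμ' : μ' ≠ 0)
    (heq : ∀ᶠ s in 𝓝 t, (E s)ᵀ * B * E s = μ s • ((E s)ᵀ * A * E s))
    (hinj : Function.Injective (E t).mulVec) :
    A.rank ≤ 4 * (Fintype.card ι - Fintype.card κ) := by
  refine A.rank_le_four_mul_of_isotropic_ker (E t) ((B - μ t • A) * E t) hinj ?_
    fun x hx y hy => dotProduct_mulVec_eq_zero_of_deriv_ne_zero hA hB hE hμ hμ' heq hx hy
  rw [← Matrix.mul_assoc, Matrix.mul_sub, Matrix.sub_mul, Matrix.mul_smul, Matrix.smul_mul,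
    heq.self_of_nhds, sub_self]

end Pencil

theorem mu_constant_of_high_rank_general {n m : ℕ}
    (A B : Matrix (Fin n) (Fin n) ℝ) (hA : A.IsSymm) (hB : B.IsSymm)
    (a b : ℝ)
    (E : ℝ → Matrix (Fin n) (Fin (n - m)) ℝ) (μ : ℝ → ℝ)
    (hE : ∀ i j, DifferentiableOn ℝ (fun t => E t i j) (Set.Ioo a b))
    (hμ : DifferentiableOn ℝ μ (Set.Ioo a b))
    (hinj : ∀ t ∈ Set.Ioo a b, Function.Injective (E t).mulVec)
    (heq : ∀ t ∈ Set.Ioo a b, (E t)ᵀ * B * E t = μ t • ((E t)ᵀ * A * E t))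
    (hrank : 4 * m < A.rank) :
    ∀ s ∈ Set.Ioo a b, ∀ t ∈ Set.Ioo a b, μ s = μ t := by
  intro s hs t ht
  refine isOpen_Ioo.is_const_of_deriv_eq_zero isPreconnected_Ioo hμ (fun r hr => ?_) hs ht
  by_contra hne
  have hnhds : Set.Ioo a b ∈ 𝓝 r := isOpen_Ioo.mem_nhds hr
  have := rank_le_of_deriv_ne_zero hA hB
    (fun i j => ((hE i j).differentiableAt hnhds).hasDerivAt)
    (hμ.differentiableAt hnhds).hasDerivAt hne (eventually_of_mem hnhds heq) (hinj r hr)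
  rw [Fintype.card_fin, Fintype.card_fin] at this
  omega

theorem mu_constant_of_high_rank {n m : ℕ}
    (A B : Matrix (Fin n) (Fin n) ℝ) (hA : A.IsSymm) (hB : B.IsSymm)
    (a b : ℝ) (hab : a < b)
    (E : ℝ → Matrix (Fin n) (Fin (n - m)) ℝ) (μ : ℝ → ℝ)
    (hE : ∀ i j, DifferentiableOn ℝ (fun t => E t i j) (Set.Ioo a b))
    (hμ : DifferentiableOn ℝ μ (Set.Ioo a b))
    (hinj : ∀ t ∈ Set.Ioo a b, Function.Injective (E t).mulVec)
    (heq : ∀ t ∈ Set.Ioo a b, (E t)ᵀ * B * E t = μ t • ((E t)ᵀ * A * E t))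
    (hrank : 4 * m < A.rank) :
    ∀ s ∈ Set.Ioo a b, ∀ t ∈ Set.Ioo a b, μ s = μ t :=
  mu_constant_of_high_rank_general A B hA hB a b E μ hE hμ hinj heq hrank
end

section
/- Let A, B be real symmetric n×n matrices, and suppose rank(B) = 2 and B is not semidefinite, so Q_B(x) = (ξ·x)(η·x) for linearly independent ξ, η ∈ ℝⁿ. Then every connected subset N of {x : xᵀAx = 0, xᵀBx = 0} on which Ax and Bx are everywhere linearly independent is contained in the hyperplane ξ^⊥ or in the hyperplane η^⊥. -/
/-!
Polarizing `xᵀBx = (ξ·x)(η·x)` gives `2 Bx = (η·x) ξ + (ξ·x) η`, so transversality (`Bx ≠ 0`) forbids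
`ξ·x` and `η·x` from vanishing together on `N`, while `xᵀBx = 0` forces one of them to vanish.
Hence `N` is covered by the open sets `{ξ·x ≠ 0}` and `{η·x ≠ 0}`, which it meets in no common
point, and connectedness puts `N` inside one of them, i.e. inside the other hyperplane.
-/

open Matrix

theorem IsPreconnected.forall_eq_zero_or_forall_eq_zero {X M : Type*} [TopologicalSpace X]
    [TopologicalSpace M] [T1Space M] [Zero M] {f g : X → M} (hf : Continuous f)
    (hg : Continuous g) {s : Set X} (hs : IsPreconnected s)
    (hzero : ∀ x ∈ s, f x = 0 ∨ g x = 0) (hne : ∀ x ∈ s, f x ≠ 0 ∨ g x ≠ 0) :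
    (∀ x ∈ s, f x = 0) ∨ (∀ x ∈ s, g x = 0) := by
  have hopen {h : X → M} (hh : Continuous h) : IsOpen {x | h x ≠ 0} :=
    hh.isOpen_preimage _ isOpen_compl_singleton
  have hdisj : s ∩ ({x | f x ≠ 0} ∩ {x | g x ≠ 0}) = ∅ := by
    ext x
    simpa [imp_iff_or_not, or_comm] using hzero x
  rcases isPreconnected_iff_subset_of_disjoint.mp hs _ _ (hopen hf) (hopen hg) hne hdisj
    with hsf | hsg
  · exact .inr fun x hx => (hzero x hx).resolve_left (hsf hx)
  · exact .inl fun x hx => (hzero x hx).resolve_right (hsg hx)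

namespace Matrix

variable {ι R : Type*} [Fintype ι] [CommRing R]

theorem IsSymm.dotProduct_mulVec_comm_s11 {B : Matrix ι ι R} (hB : B.IsSymm) (x y : ι → R) :
    x ⬝ᵥ B *ᵥ y = y ⬝ᵥ B *ᵥ x := by
  rw [dotProduct_mulVec, ← mulVec_transpose, hB.eq, dotProduct_comm]

theorem IsSymm.two_smul_mulVec_of_quadForm_eq_mul {B : Matrix ι ι R} (hB : B.IsSymm)
    {ξ η : ι → R} (hQB : ∀ x, x ⬝ᵥ B *ᵥ x = (ξ ⬝ᵥ x) * (η ⬝ᵥ x)) (x : ι → R) :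
    2 • (B *ᵥ x) = (η ⬝ᵥ x) • ξ + (ξ ⬝ᵥ x) • η := by
  refine dotProduct_eq _ _ fun y => ?_
  have hpolar := hQB (x + y)
  simp only [mulVec_add, add_dotProduct, dotProduct_add, hQB x, hQB y,
    hB.dotProduct_mulVec_comm_s11 y x] at hpolar
  simp only [smul_dotProduct, add_dotProduct, dotProduct_comm (B *ᵥ x),
    hB.dotProduct_mulVec_comm_s11 y x, smul_eq_mul, two_smul]
  linear_combination hpolar

theorem IsSymm.mulVec_eq_zero_of_quadForm_eq_mul [NoZeroDivisors R] [CharZero R]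
    {B : Matrix ι ι R} (hB : B.IsSymm) {ξ η : ι → R}
    (hQB : ∀ x, x ⬝ᵥ B *ᵥ x = (ξ ⬝ᵥ x) * (η ⬝ᵥ x)) {x : ι → R} (hξ : ξ ⬝ᵥ x = 0)
    (hη : η ⬝ᵥ x = 0) : B *ᵥ x = 0 := by
  have htwo := hB.two_smul_mulVec_of_quadForm_eq_mul hQB x
  rw [hξ, hη, zero_smul, zero_smul, add_zero] at htwo
  exact (smul_eq_zero.mp htwo).resolve_left two_ne_zero

end Matrix

theorem transversal_locus_in_hyperplane_of_rank_two_general {n : ℕ}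
    (A B : Matrix (Fin n) (Fin n) ℝ) (hB : B.IsSymm)
    (ξ η : Fin n → ℝ)
    (hQB : ∀ x : Fin n → ℝ, x ⬝ᵥ B.mulVec x = (ξ ⬝ᵥ x) * (η ⬝ᵥ x))
    (N : Set (Fin n → ℝ)) (hconn : IsPreconnected N)
    (hN : N ⊆ {x : Fin n → ℝ | x ⬝ᵥ A.mulVec x = 0 ∧ x ⬝ᵥ B.mulVec x = 0})
    (htrans : ∀ x ∈ N, LinearIndependent ℝ ![A.mulVec x, B.mulVec x]) :
    (∀ x ∈ N, ξ ⬝ᵥ x = 0) ∨ (∀ x ∈ N, η ⬝ᵥ x = 0) := by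
  refine hconn.forall_eq_zero_or_forall_eq_zero (continuous_const.dotProduct continuous_id)
    (continuous_const.dotProduct continuous_id) (fun x hx => ?_) (fun x hx => ?_)
  · rw [← mul_eq_zero, ← hQB]
    exact (hN hx).2
  · by_contra! hboth
    exact (htrans x hx).ne_zero 1 (hB.mulVec_eq_zero_of_quadForm_eq_mul hQB hboth.1 hboth.2)

theorem transversal_locus_in_hyperplane_of_rank_two {n : ℕ}
    (A B : Matrix (Fin n) (Fin n) ℝ) (hA : A.IsSymm) (hB : B.IsSymm)
    (hrB : B.rank = 2) (ξ η : Fin n → ℝ) (hli : LinearIndependent ℝ ![ξ, η])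
    (hQB : ∀ x : Fin n → ℝ, x ⬝ᵥ B.mulVec x = (ξ ⬝ᵥ x) * (η ⬝ᵥ x))
    (N : Set (Fin n → ℝ)) (hconn : IsPreconnected N)
    (hN : N ⊆ {x : Fin n → ℝ | x ⬝ᵥ A.mulVec x = 0 ∧ x ⬝ᵥ B.mulVec x = 0})
    (htrans : ∀ x ∈ N, LinearIndependent ℝ ![A.mulVec x, B.mulVec x]) :
    (∀ x ∈ N, ξ ⬝ᵥ x = 0) ∨ (∀ x ∈ N, η ⬝ᵥ x = 0) :=
  transversal_locus_in_hyperplane_of_rank_two_general A B hB ξ η hQB N hconn hN htrans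
end

section
/- Let A, B be real symmetric n×n matrices that are linearly independent, with rank(A) ≥ 3 and rank(B) ≥ 3, neither A nor B semidefinite. Then the intersection {x : xᵀAx = 0} ∩ {x : xᵀBx = 0} cannot contain a nonempty open subset of {x : xᵀAx = 0} (i.e., the two quadrics cannot coincide on an open piece of dimension n−1 without being equal). -/
/-!
Write `Q_M x = x ⬝ᵥ M *ᵥ x`. Since `A` is indefinite, `V` contains a regular point `p` of the
cone `Q_A = 0` (one with `A p ≠ 0`), and since `rank A ≥ 3`, `Q_A` does not vanish on the tangent
hyperplane `(A p)⊥`, say `Q_A h₀ ≠ 0` there. Projection from `p`,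
`φ x = Q_A x • p - 2 (A p ⬝ᵥ x) • x`, maps every `x` into the cone and, after rescaling, a
neighbourhood of `h₀` into `V`. So the polynomial `Q_B ∘ φ` vanishes on an open set, hence
everywhere. Dividing its expansion by `A p ⬝ᵥ x` (off a hyperplane, then everywhere by the same
identity principle) gives `(A p ⬝ᵥ x) Q_B x = Q_A x (B p ⬝ᵥ x)`. On the tangent hyperplane this
forces `B p = μ A p`, and dividing once more, `Q_B = μ Q_A`, i.e. `B = μ A`.
-/

open Matrix Filter Topology Set
open scoped ContDiff

theorem ContDiff.eq_zero_of_eventuallyEq_zero {E F : Type*} [NormedAddCommGroup E]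
    [NormedSpace ℝ E] [NormedAddCommGroup F] [NormedSpace ℝ F] {f : E → F}
    (hf : ContDiff ℝ ω f) {x₀ : E} (h : f =ᶠ[𝓝 x₀] 0) : f = 0 :=
  hf.analyticOnNhd.eq_of_eventuallyEq analyticOnNhd_const h

namespace Matrix

variable {ι : Type*} [Fintype ι]

theorem exists_dotProduct_eq_one {w : ι → ℝ} (hw : w ≠ 0) : ∃ e, w ⬝ᵥ e = 1 :=
  ⟨(w ⬝ᵥ w)⁻¹ • w, by
    rw [dotProduct_smul, smul_eq_mul, mul_comm, mul_inv_cancel₀ (mt dotProduct_self_eq_zero.1 hw)]⟩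

theorem exists_eq_smul_of_dotProduct_eq_zero {v w : ι → ℝ} (hw : w ≠ 0)
    (h : ∀ x, w ⬝ᵥ x = 0 → v ⬝ᵥ x = 0) : ∃ μ : ℝ, v = μ • w := by
  classical
  obtain ⟨e, hwe⟩ := exists_dotProduct_eq_one hw
  refine ⟨v ⬝ᵥ e, funext fun i => ?_⟩
  have := h (Pi.single i 1 - w i • e) (by simp [dotProduct_sub, hwe])
  simpa [dotProduct_sub, sub_eq_zero, mul_comm] using this

theorem eq_zero_of_dotProduct_mul_eq_zero {w : ι → ℝ} (hw : w ≠ 0) {f : (ι → ℝ) → ℝ}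
    (hf : ContDiff ℝ ω f) (h : ∀ x, (w ⬝ᵥ x) * f x = 0) : f = 0 := by
  have hU : IsOpen {x | w ⬝ᵥ x ≠ 0} := isOpen_ne_fun (by fun_prop) continuous_const
  refine hf.eq_zero_of_eventuallyEq_zero (x₀ := w) (eventually_of_mem (hU.mem_nhds ?_) ?_)
  · exact mt dotProduct_self_eq_zero.1 hw
  · exact fun x hx => (mul_eq_zero.1 (h x)).resolve_left hx

variable {A : Matrix ι ι ℝ}

theorem IsSymm.dotProduct_mulVec (hA : A.IsSymm) (x y : ι → ℝ) :
    x ⬝ᵥ A *ᵥ y = A *ᵥ x ⬝ᵥ y := by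
  rw [Matrix.dotProduct_mulVec, ← mulVec_transpose, hA.eq]

theorem IsSymm.dotProduct_mulVec_smul_add_smul (hA : A.IsSymm) (a b : ℝ) (x y : ι → ℝ) :
    (a • x + b • y) ⬝ᵥ A *ᵥ (a • x + b • y) =
      a ^ 2 * (x ⬝ᵥ A *ᵥ x) + 2 * a * b * (A *ᵥ x ⬝ᵥ y) + b ^ 2 * (y ⬝ᵥ A *ᵥ y) := by
  simp only [mulVec_add, mulVec_smul, dotProduct_add, add_dotProduct, smul_dotProduct,
    dotProduct_smul, smul_eq_mul, hA.dotProduct_mulVec y x, dotProduct_comm (A *ᵥ y) x,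
    hA.dotProduct_mulVec x y]
  ring

theorem IsSymm.dotProduct_mulVec_add (hA : A.IsSymm) (x y : ι → ℝ) :
    (x + y) ⬝ᵥ A *ᵥ (x + y) = x ⬝ᵥ A *ᵥ x + 2 * (A *ᵥ x ⬝ᵥ y) + y ⬝ᵥ A *ᵥ y := by
  simpa using hA.dotProduct_mulVec_smul_add_smul 1 1 x y

theorem IsSymm.eq_zero_of_dotProduct_mulVec_self (hA : A.IsSymm)
    (h : ∀ x, x ⬝ᵥ A *ᵥ x = 0) : A = 0 := by
  classical
  have polar : ∀ x y, A *ᵥ x ⬝ᵥ y = 0 := fun x y => by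
    linarith [hA.dotProduct_mulVec_add x y, h x, h y, h (x + y)]
  ext i j
  simpa [mulVec_single] using polar (Pi.single j 1) (Pi.single i 1)

theorem IsSymm.exists_dotProduct_mulVec_self_neg (hA : A.IsSymm) (h : ¬A.PosSemidef) :
    ∃ x, x ⬝ᵥ A *ᵥ x < 0 := by
  by_contra! hx
  exact h (posSemidef_iff_dotProduct_mulVec.2
    ⟨isHermitian_iff_isSymm.2 hA, fun x => by simpa using hx x⟩)

theorem IsSymm.rank_le_two_of_dotProduct_mulVec_self_eq_zero (hA : A.IsSymm) {w : ι → ℝ}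
    (hw : w ≠ 0) (h : ∀ x, w ⬝ᵥ x = 0 → x ⬝ᵥ A *ᵥ x = 0) : A.rank ≤ 2 := by
  classical
  have polar : ∀ x y, w ⬝ᵥ x = 0 → w ⬝ᵥ y = 0 → A *ᵥ x ⬝ᵥ y = 0 := fun x y hx hy => by
    have := h (x + y) (by rw [dotProduct_add, hx, hy, add_zero])
    linarith [hA.dotProduct_mulVec_add x y, h x hx, h y hy]
  obtain ⟨e, hwe⟩ := exists_dotProduct_eq_one hw
  -- `A` maps the hyperplane `w⊥` into the line `ℝ w`, so its range lies in `span {w, A e}`.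
  have hrange : LinearMap.range A.mulVecLin ≤ Submodule.span ℝ {w, A *ᵥ e} := by
    rintro _ ⟨x, rfl⟩
    have hx' : w ⬝ᵥ (x - (w ⬝ᵥ x) • e) = 0 := by simp [dotProduct_sub, hwe]
    obtain ⟨μ, hμ⟩ := exists_eq_smul_of_dotProduct_eq_zero hw (polar _ · hx')
    refine Submodule.mem_span_pair.2 ⟨μ, w ⬝ᵥ x, ?_⟩
    rw [← hμ, ← mulVec_smul, ← mulVec_add, sub_add_cancel, mulVecLin_apply]
  calc A.rank ≤ Module.finrank ℝ (Submodule.span ℝ {w, A *ᵥ e}) := Submodule.finrank_mono hrange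
    _ ≤ 2 := by
      have := finrank_span_finset_le_card (R := ℝ) ({w, A *ᵥ e} : Finset (ι → ℝ))
      rw [Finset.coe_pair] at this
      exact this.trans Finset.card_le_two

theorem IsSymm.exists_dotProduct_mulVec_self_eq_zero_mulVec_ne_zero (hA : A.IsSymm)
    {u w : ι → ℝ} (hu : 0 < u ⬝ᵥ A *ᵥ u) (hw : w ⬝ᵥ A *ᵥ w < 0) :
    ∃ v, v ⬝ᵥ A *ᵥ v = 0 ∧ A *ᵥ v ≠ 0 := by
  obtain ⟨t, ⟨ht0, ht1⟩, ht⟩ : ∃ t ∈ Icc (0 : ℝ) 1,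
      (1 - t) ^ 2 * (u ⬝ᵥ A *ᵥ u) + 2 * (1 - t) * t * (A *ᵥ u ⬝ᵥ w) + t ^ 2 * (w ⬝ᵥ A *ᵥ w) = 0 :=
    intermediate_value_Icc' zero_le_one (by fun_prop) ⟨by norm_num; linarith, by norm_num; linarith⟩
  refine ⟨(1 - t) • u + t • w, by rw [hA.dotProduct_mulVec_smul_add_smul, ht], fun hv => ?_⟩
  have hu' : u ⬝ᵥ A *ᵥ ((1 - t) • u + t • w) = 0 := by rw [hv, dotProduct_zero]
  have hw' : w ⬝ᵥ A *ᵥ ((1 - t) • u + t • w) = 0 := by rw [hv, dotProduct_zero]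
  simp only [mulVec_add, mulVec_smul, dotProduct_add, dotProduct_smul, smul_eq_mul,
    hA.dotProduct_mulVec w u, hA.dotProduct_mulVec u w, dotProduct_comm (A *ᵥ w) u] at hu' hw'
  have key : (1 - t) ^ 2 * (u ⬝ᵥ A *ᵥ u) = t ^ 2 * (w ⬝ᵥ A *ᵥ w) := by
    linear_combination (1 - t) * hu' - t * hw'
  have ht : t = 1 := by
    by_contra hne
    have := mul_pos (pow_pos (sub_pos.2 (lt_of_le_of_ne ht1 hne)) 2) hu
    linarith [mul_nonpos_of_nonneg_of_nonpos (sq_nonneg t) hw.le]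
  subst ht
  norm_num at key
  linarith

theorem IsSymm.exists_mem_dotProduct_mulVec_self_eq_zero_mulVec_ne_zero (hA : A.IsSymm)
    {V : Set (ι → ℝ)} (hV : IsOpen V) {p₀ : ι → ℝ} (hp₀V : p₀ ∈ V)
    (hp₀ : p₀ ⬝ᵥ A *ᵥ p₀ = 0) {v : ι → ℝ} (hv : v ⬝ᵥ A *ᵥ v = 0) (hAv : A *ᵥ v ≠ 0) :
    ∃ p ∈ V, p ⬝ᵥ A *ᵥ p = 0 ∧ A *ᵥ p ≠ 0 := by
  by_cases hAp₀ : A *ᵥ p₀ = 0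
  · have hline : Tendsto (fun t : ℝ => p₀ + t • v) (𝓝[≠] 0) (𝓝 p₀) := by
      have : Continuous (fun t : ℝ => p₀ + t • v) := by fun_prop
      simpa using (this.tendsto 0).mono_left nhdsWithin_le_nhds
    obtain ⟨t, htV, ht⟩ := ((hline.eventually (hV.mem_nhds hp₀V)).and self_mem_nhdsWithin).exists
    refine ⟨p₀ + t • v, htV, ?_, ?_⟩
    · simpa [hAp₀, hp₀, hv] using hA.dotProduct_mulVec_smul_add_smul 1 t p₀ v
    · rw [mulVec_add, mulVec_smul, hAp₀, zero_add]
      exact smul_ne_zero ht hAv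
  · exact ⟨p₀, hp₀V, hp₀, hAp₀⟩

variable {B : Matrix ι ι ℝ}

theorem IsSymm.mulVec_dotProduct_mul_eq_of_subset (hA : A.IsSymm) (hB : B.IsSymm)
    {V : Set (ι → ℝ)} (hV : IsOpen V)
    (hsub : V ∩ {x | x ⬝ᵥ A *ᵥ x = 0} ⊆ {x | x ⬝ᵥ B *ᵥ x = 0}) {p h₀ : ι → ℝ} (hpV : p ∈ V)
    (hp : p ⬝ᵥ A *ᵥ p = 0) (hAp : A *ᵥ p ≠ 0) (hph₀ : A *ᵥ p ⬝ᵥ h₀ = 0)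
    (hh₀ : h₀ ⬝ᵥ A *ᵥ h₀ ≠ 0) (x : ι → ℝ) :
    (A *ᵥ p ⬝ᵥ x) * (x ⬝ᵥ B *ᵥ x) = (x ⬝ᵥ A *ᵥ x) * (B *ᵥ p ⬝ᵥ x) := by
  have hBp : p ⬝ᵥ B *ᵥ p = 0 := hsub ⟨hpV, hp⟩
  set c := h₀ ⬝ᵥ A *ᵥ h₀
  -- `φ x` is a multiple of the second point where the line through `p` in direction `x` meets
  -- the cone `Q_A = 0`; the factor `1 / c` makes `φ h₀ = p`.
  set φ : (ι → ℝ) → ι → ℝ :=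
    fun x => ((x ⬝ᵥ A *ᵥ x) / c) • p + (-2 * (A *ᵥ p ⬝ᵥ x) / c) • x
  have hφA : ∀ x, φ x ⬝ᵥ A *ᵥ φ x = 0 := fun x => by
    simp only [φ, hA.dotProduct_mulVec_smul_add_smul, hp]
    ring
  have hφB : ∀ x, φ x ⬝ᵥ B *ᵥ φ x = 4 / c ^ 2 * ((A *ᵥ p ⬝ᵥ x) *
      ((A *ᵥ p ⬝ᵥ x) * (x ⬝ᵥ B *ᵥ x) - (x ⬝ᵥ A *ᵥ x) * (B *ᵥ p ⬝ᵥ x))) := fun x => by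
    simp only [φ, hB.dotProduct_mulVec_smul_add_smul, hBp]
    ring
  have hφh₀ : φ h₀ = p := by
    simp only [φ, hph₀, mul_zero, zero_div, zero_smul, add_zero]
    rw [div_self hh₀, one_smul]
  have hφV : ∀ᶠ x in 𝓝 h₀, φ x ∈ V := by
    have : Continuous φ := by simp only [φ, dotProduct, mulVec]; fun_prop
    exact this.continuousAt.eventually_mem (hφh₀ ▸ hV.mem_nhds hpV)
  have hF : (fun x => (A *ᵥ p ⬝ᵥ x) *
      ((A *ᵥ p ⬝ᵥ x) * (x ⬝ᵥ B *ᵥ x) - (x ⬝ᵥ A *ᵥ x) * (B *ᵥ p ⬝ᵥ x))) = 0 := by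
    refine ContDiff.eq_zero_of_eventuallyEq_zero (by simp only [dotProduct, mulVec]; fun_prop)
      (hφV.mono fun x hx => ?_)
    have : φ x ⬝ᵥ B *ᵥ φ x = 0 := hsub ⟨hx, hφA x⟩
    rw [hφB] at this
    simpa [hh₀] using this
  have hG := eq_zero_of_dotProduct_mul_eq_zero hAp (by simp only [dotProduct, mulVec]; fun_prop)
    (congrFun hF)
  simpa [sub_eq_zero] using congrFun hG x

theorem IsSymm.exists_eq_smul_of_mulVec_dotProduct_mul_eq (hA : A.IsSymm) (hB : B.IsSymm)
    {p h₀ : ι → ℝ} (hAp : A *ᵥ p ≠ 0) (hph₀ : A *ᵥ p ⬝ᵥ h₀ = 0)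
    (hh₀ : h₀ ⬝ᵥ A *ᵥ h₀ ≠ 0)
    (h : ∀ x, (A *ᵥ p ⬝ᵥ x) * (x ⬝ᵥ B *ᵥ x) = (x ⬝ᵥ A *ᵥ x) * (B *ᵥ p ⬝ᵥ x)) :
    ∃ μ : ℝ, B = μ • A := by
  have htan : ∀ x, A *ᵥ p ⬝ᵥ x = 0 → (x ⬝ᵥ A *ᵥ x) * (B *ᵥ p ⬝ᵥ x) = 0 := fun x hx => by
    simpa [hx] using (h x).symm
  have hBph₀ : B *ᵥ p ⬝ᵥ h₀ = 0 := (mul_eq_zero.1 (htan h₀ hph₀)).resolve_left hh₀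
  have hBp : ∀ x, A *ᵥ p ⬝ᵥ x = 0 → B *ᵥ p ⬝ᵥ x = 0 := by
    intro x hx
    -- `Q_A (h₀ + s x) * (B p ⬝ (h₀ + s x)) = 0` for all `s`; its values at `s = 1, -1, 2`
    -- isolate the coefficient of `s`, which is `Q_A h₀ * (B p ⬝ x)`.
    have hs : ∀ s : ℝ, s * (B *ᵥ p ⬝ᵥ x) *
        (h₀ ⬝ᵥ A *ᵥ h₀ + 2 * s * (A *ᵥ h₀ ⬝ᵥ x) + s ^ 2 * (x ⬝ᵥ A *ᵥ x)) = 0 := fun s => by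
      have := htan ((1 : ℝ) • h₀ + s • x) (by simp [dotProduct_add, hph₀, hx])
      simp only [hA.dotProduct_mulVec_smul_add_smul, dotProduct_add, dotProduct_smul, hBph₀,
        smul_eq_mul] at this
      linear_combination this
    have : (h₀ ⬝ᵥ A *ᵥ h₀) * (B *ᵥ p ⬝ᵥ x) = 0 := by
      linear_combination hs 1 - hs (-1) / 3 - hs 2 / 6
    exact (mul_eq_zero.1 this).resolve_left hh₀
  obtain ⟨μ, hμ⟩ := exists_eq_smul_of_dotProduct_eq_zero hAp hBp
  have hBpx : ∀ x, B *ᵥ p ⬝ᵥ x = μ * (A *ᵥ p ⬝ᵥ x) := fun x => by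
    rw [hμ, smul_dotProduct, smul_eq_mul]
  have hQ := eq_zero_of_dotProduct_mul_eq_zero hAp
    (f := fun x => x ⬝ᵥ B *ᵥ x - μ * (x ⬝ᵥ A *ᵥ x)) (by simp only [dotProduct, mulVec]; fun_prop)
    fun x => by linear_combination h x + (x ⬝ᵥ A *ᵥ x) * hBpx x
  refine ⟨μ, sub_eq_zero.1 ((hB.sub (hA.smul μ)).eq_zero_of_dotProduct_mulVec_self fun x => ?_)⟩
  simpa [sub_mulVec, smul_mulVec, dotProduct_sub] using congrFun hQ x

end Matrix

theorem quadrics_cannot_coincide_on_open_piece_general {n : ℕ}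
    (A B : Matrix (Fin n) (Fin n) ℝ) (hA : A.IsSymm) (hB : B.IsSymm)
    (hli : LinearIndependent ℝ ![A, B]) (hrA : 3 ≤ A.rank)
    (hAposs : ¬ A.PosSemidef) (hAnegs : ¬ (-A).PosSemidef) :
    ¬ ∃ V : Set (Fin n → ℝ), IsOpen V ∧
      (V ∩ {x : Fin n → ℝ | x ⬝ᵥ A.mulVec x = 0}).Nonempty ∧
      V ∩ {x : Fin n → ℝ | x ⬝ᵥ A.mulVec x = 0} ⊆
        {x : Fin n → ℝ | x ⬝ᵥ B.mulVec x = 0} := by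
  rintro ⟨V, hV, ⟨p₀, hp₀V, hp₀⟩, hsub⟩
  obtain ⟨u, hu⟩ := hA.neg.exists_dotProduct_mulVec_self_neg hAnegs
  obtain ⟨w, hw⟩ := hA.exists_dotProduct_mulVec_self_neg hAposs
  obtain ⟨v, hv, hAv⟩ := hA.exists_dotProduct_mulVec_self_eq_zero_mulVec_ne_zero
    (u := u) (by simpa [neg_mulVec] using hu) hw
  obtain ⟨p, hpV, hp, hAp⟩ :=
    hA.exists_mem_dotProduct_mulVec_self_eq_zero_mulVec_ne_zero hV hp₀V hp₀ hv hAv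
  obtain ⟨h₀, hph₀, hh₀⟩ : ∃ h₀, A *ᵥ p ⬝ᵥ h₀ = 0 ∧ h₀ ⬝ᵥ A *ᵥ h₀ ≠ 0 := by
    by_contra! hT
    exact absurd (hA.rank_le_two_of_dotProduct_mulVec_self_eq_zero hAp hT) (by omega)
  obtain ⟨μ, rfl⟩ := hA.exists_eq_smul_of_mulVec_dotProduct_mul_eq hB hAp hph₀ hh₀
    (hA.mulVec_dotProduct_mul_eq_of_subset hB hV hsub hpV hp hAp hph₀ hh₀)
  have := LinearIndependent.pair_iff.1 hli μ (-1) (by simp)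
  norm_num at this

theorem quadrics_cannot_coincide_on_open_piece {n : ℕ}
    (A B : Matrix (Fin n) (Fin n) ℝ) (hA : A.IsSymm) (hB : B.IsSymm)
    (hli : LinearIndependent ℝ ![A, B]) (hrA : 3 ≤ A.rank) (hrB : 3 ≤ B.rank)
    (hAposs : ¬ A.PosSemidef) (hAnegs : ¬ (-A).PosSemidef)
    (hBposs : ¬ B.PosSemidef) (hBnegs : ¬ (-B).PosSemidef) :
    ¬ ∃ V : Set (Fin n → ℝ), IsOpen V ∧
      (V ∩ {x : Fin n → ℝ | x ⬝ᵥ A.mulVec x = 0}).Nonempty ∧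
      V ∩ {x : Fin n → ℝ | x ⬝ᵥ A.mulVec x = 0} ⊆
        {x : Fin n → ℝ | x ⬝ᵥ B.mulVec x = 0} :=
  quadrics_cannot_coincide_on_open_piece_general A B hA hB hli hrA hAposs hAnegs
end

section
/- Let f(x) = xᵀ𝒜x − 1 and g(x) = xᵀℬx + ξ·x − 1 where 𝒜, ℬ are real symmetric k×k matrices, 𝒜 positive definite, and ξ ∈ ℝᵏ. Suppose f(x) ≤ 0 implies g(x) ≤ 0 for all x ∈ ℝᵏ. Then tr(𝒜) ≥ tr(ℬ); moreover, either f = g identically or tr(𝒜) > tr(ℬ). -/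
open Matrix

/-!
Averaging the hypothesis at `x` and `-x` on the ellipsoid `xᵀ𝒜x = 1` cancels the linear term and
gives `xᵀℬx ≤ xᵀ𝒜x` there, hence everywhere by homogeneity: `𝒜 - ℬ` is positive semidefinite.
Its trace is then nonnegative, and vanishes only if `𝒜 = ℬ`. In that case testing the hypothesis
at the point of the ellipsoid in the direction of `ξ` gives `ξ ⬝ᵥ ξ ≤ 0`, so `ξ = 0`.
-/

variable {n : Type*} [Fintype n]

lemma dotProduct_mulVec_smul_smul (M : Matrix n n ℝ) (c : ℝ) (x : n → ℝ) :
    (c • x) ⬝ᵥ M *ᵥ (c • x) = c ^ 2 * (x ⬝ᵥ M *ᵥ x) := by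
  simp only [mulVec_smul, smul_dotProduct, dotProduct_smul, smul_eq_mul]
  ring

lemma Matrix.PosDef.exists_pos_smul_dotProduct_mulVec_eq_one {A : Matrix n n ℝ} (hA : A.PosDef)
    {x : n → ℝ} (hx : x ≠ 0) : ∃ c : ℝ, 0 < c ∧ (c • x) ⬝ᵥ A *ᵥ (c • x) = 1 := by
  have hpos : 0 < x ⬝ᵥ A *ᵥ x := by simpa using hA.dotProduct_mulVec_pos hx
  refine ⟨(√(x ⬝ᵥ A *ᵥ x))⁻¹, by positivity, ?_⟩
  rw [dotProduct_mulVec_smul_smul, inv_pow, Real.sq_sqrt hpos.le, inv_mul_cancel₀ hpos.ne']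

section SublevelInclusion

variable {A B : Matrix n n ℝ} {ξ : n → ℝ}

lemma dotProduct_mulVec_le_of_sublevel_subset (hA : A.PosDef)
    (h : ∀ x, x ⬝ᵥ A *ᵥ x ≤ 1 → x ⬝ᵥ B *ᵥ x + ξ ⬝ᵥ x ≤ 1) (x : n → ℝ) :
    x ⬝ᵥ B *ᵥ x ≤ x ⬝ᵥ A *ᵥ x := by
  rcases eq_or_ne x 0 with rfl | hx
  · simp
  obtain ⟨c, hc, hy⟩ := hA.exists_pos_smul_dotProduct_mulVec_eq_one hx
  have hplus := h (c • x) hy.le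
  have hminus := h (-(c • x)) (by rw [mulVec_neg, dotProduct_neg, neg_dotProduct, neg_neg]; exact hy.le)
  simp only [mulVec_neg, dotProduct_neg, neg_dotProduct, neg_neg] at hminus
  have hB : (c • x) ⬝ᵥ B *ᵥ (c • x) ≤ (c • x) ⬝ᵥ A *ᵥ (c • x) := by linarith
  rw [dotProduct_mulVec_smul_smul, dotProduct_mulVec_smul_smul] at hB
  exact le_of_mul_le_mul_left hB (by positivity)

lemma posSemidef_sub_of_sublevel_subset (hA : A.PosDef) (hB : B.IsSymm)
    (h : ∀ x, x ⬝ᵥ A *ᵥ x ≤ 1 → x ⬝ᵥ B *ᵥ x + ξ ⬝ᵥ x ≤ 1) : (A - B).PosSemidef := by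
  refine .of_dotProduct_mulVec_nonneg (hA.isHermitian.sub (isHermitian_iff_isSymm.2 hB))
    fun x => ?_
  simpa [sub_mulVec, dotProduct_sub] using dotProduct_mulVec_le_of_sublevel_subset hA h x

lemma eq_zero_of_sublevel_subset_self (hA : A.PosDef)
    (h : ∀ x, x ⬝ᵥ A *ᵥ x ≤ 1 → x ⬝ᵥ A *ᵥ x + ξ ⬝ᵥ x ≤ 1) : ξ = 0 := by
  by_contra hξ
  obtain ⟨c, hc, hy⟩ := hA.exists_pos_smul_dotProduct_mulVec_eq_one hξ
  have hle := h (c • ξ) hy.le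
  rw [hy, dotProduct_smul, smul_eq_mul] at hle
  have hpos : 0 < ξ ⬝ᵥ ξ := by simpa using dotProduct_self_star_pos_iff.2 hξ
  nlinarith

end SublevelInclusion

theorem trace_comparison_of_sublevel_inclusion {k : ℕ}
    (𝒜 ℬ : Matrix (Fin k) (Fin k) ℝ) (h𝒜 : 𝒜.PosDef) (hℬ : ℬ.IsSymm)
    (ξ : Fin k → ℝ)
    (h : ∀ x : Fin k → ℝ, x ⬝ᵥ 𝒜.mulVec x - 1 ≤ 0 → x ⬝ᵥ ℬ.mulVec x + ξ ⬝ᵥ x - 1 ≤ 0) :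
    ℬ.trace ≤ 𝒜.trace ∧
      ((∀ x : Fin k → ℝ, x ⬝ᵥ 𝒜.mulVec x - 1 = x ⬝ᵥ ℬ.mulVec x + ξ ⬝ᵥ x - 1) ∨
        ℬ.trace < 𝒜.trace) := by
  have hsub : ∀ x, x ⬝ᵥ 𝒜 *ᵥ x ≤ 1 → x ⬝ᵥ ℬ *ᵥ x + ξ ⬝ᵥ x ≤ 1 := fun x hx =>
    sub_nonpos.1 (h x (sub_nonpos.2 hx))
  have hpsd := posSemidef_sub_of_sublevel_subset h𝒜 hℬ hsub
  have htr : ℬ.trace ≤ 𝒜.trace := by simpa [trace_sub] using hpsd.trace_nonneg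
  refine ⟨htr, htr.lt_or_eq.symm.imp (fun htr_eq => ?_) id⟩
  obtain rfl : 𝒜 = ℬ :=
    sub_eq_zero.1 (hpsd.trace_eq_zero_iff.1 (by rw [trace_sub, htr_eq, sub_self]))
  obtain rfl := eq_zero_of_sublevel_subset_self h𝒜 hsub
  simp
end

section
/- On ℝ⁴ with coordinates (x₁, x₂, y₁, y₂) and the standard symplectic Poisson bracket {f,g} = Σⱼ (∂f/∂yⱼ ∂g/∂xⱼ − ∂f/∂xⱼ ∂g/∂yⱼ), define Q_A(x,y) = x₁y₂ + x₂y₁ and Q_B(x,y) = x₁y₁ − x₂y₂. Then Q_C := {Q_A, Q_B} is a quadratic form proportional to x₁y₂ − x₂y₁, the common zero set {Q_A = 0} ∩ {Q_B = 0} equals {(x,y) : x = 0 or y = 0}, Q_C vanishes on this common zero set, and A, B, C are linearly independent. -/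
open Matrix

noncomputable def QA16 (v : Fin 4 → ℝ) : ℝ := v 0 * v 3 + v 1 * v 2

noncomputable def QB16 (v : Fin 4 → ℝ) : ℝ := v 0 * v 2 - v 1 * v 3

/-- The standard symplectic Poisson bracket on ℝ⁴ with coordinates
(x₁,x₂,y₁,y₂) = (v 0, v 1, v 2, v 3). -/
noncomputable def poissonBracket16 (f g : (Fin 4 → ℝ) → ℝ) (v : Fin 4 → ℝ) : ℝ :=
  (fderiv ℝ f v (Pi.single (2 : Fin 4) (1 : ℝ))) * (fderiv ℝ g v (Pi.single (0 : Fin 4) (1 : ℝ)))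
  - (fderiv ℝ f v (Pi.single (0 : Fin 4) (1 : ℝ))) * (fderiv ℝ g v (Pi.single (2 : Fin 4) (1 : ℝ)))
  + (fderiv ℝ f v (Pi.single (3 : Fin 4) (1 : ℝ))) * (fderiv ℝ g v (Pi.single (1 : Fin 4) (1 : ℝ)))
  - (fderiv ℝ f v (Pi.single (1 : Fin 4) (1 : ℝ))) * (fderiv ℝ g v (Pi.single (3 : Fin 4) (1 : ℝ)))

/-!
Identify `(x₁, x₂)` and `(y₁, y₂)` with `z = x₁ + i x₂` and `w = y₁ + i y₂`. Then
`Q_B + i Q_A = z w`, so `Q_A` and `Q_B` vanish together exactly where `z = 0` or `w = 0`, and there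
the bracket `{Q_A, Q_B} = -2 (x₁ y₂ - x₂ y₁) = -2 Im (z̄ w)` vanishes as well. It is nevertheless
not a combination of `Q_A` and `Q_B`, as evaluation at three points shows; independence of the
quadratic forms implies independence of their matrices.
-/

theorem Matrix.linearIndependent_of_linearIndependent_dotProduct_mulVec
    {R ι n : Type*} [CommSemiring R] [Fintype n] {M : ι → Matrix n n R}
    (h : LinearIndependent R fun i v => v ⬝ᵥ M i *ᵥ v) : LinearIndependent R M := by
  let quad : Matrix n n R →ₗ[R] (n → R) → R :=
    { toFun := fun N v => v ⬝ᵥ N *ᵥ v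
      map_add' := fun N N' => by ext v; simp [add_mulVec, dotProduct_add]
      map_smul' := fun c N => by ext v; simp [smul_mulVec, dotProduct_smul] }
  exact h.of_comp quad

theorem hasFDerivAt_apply_mul_apply {𝕜 n : Type*} [NontriviallyNormedField 𝕜] [Fintype n]
    (i j : n) (v : n → 𝕜) :
    HasFDerivAt (fun w : n → 𝕜 => w i * w j)
      (v i • ContinuousLinearMap.proj (R := 𝕜) j + v j • ContinuousLinearMap.proj i) v :=
  (hasFDerivAt_apply i v).mul (hasFDerivAt_apply j v)

theorem fderiv_QA16_apply (v h : Fin 4 → ℝ) :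
    fderiv ℝ QA16 v h = v 0 * h 3 + v 3 * h 0 + (v 1 * h 2 + v 2 * h 1) := by
  have hQ : HasFDerivAt QA16 _ v :=
    (hasFDerivAt_apply_mul_apply 0 3 v).add (hasFDerivAt_apply_mul_apply 1 2 v)
  rw [hQ.fderiv]
  simp

theorem fderiv_QB16_apply (v h : Fin 4 → ℝ) :
    fderiv ℝ QB16 v h = v 0 * h 2 + v 2 * h 0 - (v 1 * h 3 + v 3 * h 1) := by
  have hQ : HasFDerivAt QB16 _ v :=
    (hasFDerivAt_apply_mul_apply 0 2 v).sub (hasFDerivAt_apply_mul_apply 1 3 v)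
  rw [hQ.fderiv]
  simp

theorem poissonBracket16_QA16_QB16 (v : Fin 4 → ℝ) :
    poissonBracket16 QA16 QB16 v = -2 * (v 0 * v 3 - v 1 * v 2) := by
  simp only [poissonBracket16, fderiv_QA16_apply, fderiv_QB16_apply]
  simp only [Fin.isValue, ne_eq, Fin.reduceEq, not_false_eq_true, Pi.single_eq_of_ne, mul_zero,
    add_zero, Pi.single_eq_same, mul_one, zero_add, one_ne_zero, sub_zero, zero_ne_one, zero_sub,
    mul_neg, sub_neg_eq_add, neg_mul]
  ring

theorem complex_mul_eq_QB16_QA16 (v : Fin 4 → ℝ) :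
    (⟨v 0, v 1⟩ * ⟨v 2, v 3⟩ : ℂ) = ⟨QB16 v, QA16 v⟩ := by
  apply Complex.ext <;> simp [QA16, QB16]

theorem QA16_eq_zero_and_QB16_eq_zero_iff (v : Fin 4 → ℝ) :
    QA16 v = 0 ∧ QB16 v = 0 ↔ (v 0 = 0 ∧ v 1 = 0) ∨ (v 2 = 0 ∧ v 3 = 0) := by
  simpa [Complex.ext_iff, and_comm] using congrArg (· = 0) (complex_mul_eq_QB16_QA16 v).symm

theorem linearIndependent_QA16_QB16_poissonBracket16 :
    LinearIndependent ℝ ![QA16, QB16, poissonBracket16 QA16 QB16] := by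
  rw [Fintype.linearIndependent_iff]
  intro g hg
  have hcomb (v : Fin 4 → ℝ) :
      g 0 * QA16 v + g 1 * QB16 v + g 2 * (-2 * (v 0 * v 3 - v 1 * v 2)) = 0 := by
    simpa [Fin.sum_univ_three, poissonBracket16_QA16_QB16] using congrFun hg v
  have h₁ : g 0 - g 2 * 2 = 0 := by simpa [QA16, QB16, ← sub_eq_add_neg] using hcomb ![1, 0, 0, 1]
  have h₂ : g 0 + g 2 * 2 = 0 := by simpa [QA16, QB16] using hcomb ![0, 1, 1, 0]
  have h₃ : g 1 = 0 := by simpa [QA16, QB16] using hcomb ![1, 0, 1, 0]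
  intro i
  fin_cases i <;> simp <;> linarith

theorem rank_four_counterexample_general (A B C : Matrix (Fin 4) (Fin 4) ℝ)
    (hA : ∀ v : Fin 4 → ℝ, v ⬝ᵥ A.mulVec v = QA16 v)
    (hB : ∀ v : Fin 4 → ℝ, v ⬝ᵥ B.mulVec v = QB16 v)
    (hC : ∀ v : Fin 4 → ℝ, v ⬝ᵥ C.mulVec v = poissonBracket16 QA16 QB16 v) :
    (∃ c : ℝ, c ≠ 0 ∧ ∀ v : Fin 4 → ℝ, v ⬝ᵥ C.mulVec v = c * (v 0 * v 3 - v 1 * v 2)) ∧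
    {v : Fin 4 → ℝ | QA16 v = 0 ∧ QB16 v = 0} =
      {v : Fin 4 → ℝ | (v 0 = 0 ∧ v 1 = 0) ∨ (v 2 = 0 ∧ v 3 = 0)} ∧
    (∀ v : Fin 4 → ℝ, QA16 v = 0 → QB16 v = 0 → v ⬝ᵥ C.mulVec v = 0) ∧
    LinearIndependent ℝ ![A, B, C] := by
  have hC' (v : Fin 4 → ℝ) : v ⬝ᵥ C *ᵥ v = -2 * (v 0 * v 3 - v 1 * v 2) :=
    (hC v).trans (poissonBracket16_QA16_QB16 v)
  refine ⟨⟨-2, by norm_num, hC'⟩, Set.ext QA16_eq_zero_and_QB16_eq_zero_iff, ?_, ?_⟩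
  · intro v hA₀ hB₀
    rw [hC']
    rcases (QA16_eq_zero_and_QB16_eq_zero_iff v).mp ⟨hA₀, hB₀⟩ with ⟨hx₁, hx₂⟩ | ⟨hy₁, hy₂⟩ <;>
      simp [*]
  · have hforms :
        (fun i v => v ⬝ᵥ ![A, B, C] i *ᵥ v) = ![QA16, QB16, poissonBracket16 QA16 QB16] := by
      ext i v
      fin_cases i <;> simp [hA, hB, hC]
    apply Matrix.linearIndependent_of_linearIndependent_dotProduct_mulVec
    rw [hforms]
    exact linearIndependent_QA16_QB16_poissonBracket16

theorem rank_four_counterexample (A B C : Matrix (Fin 4) (Fin 4) ℝ)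
    (hAs : A.IsSymm) (hBs : B.IsSymm) (hCs : C.IsSymm)
    (hA : ∀ v : Fin 4 → ℝ, v ⬝ᵥ A.mulVec v = QA16 v)
    (hB : ∀ v : Fin 4 → ℝ, v ⬝ᵥ B.mulVec v = QB16 v)
    (hC : ∀ v : Fin 4 → ℝ, v ⬝ᵥ C.mulVec v = poissonBracket16 QA16 QB16 v) :
    (∃ c : ℝ, c ≠ 0 ∧ ∀ v : Fin 4 → ℝ, v ⬝ᵥ C.mulVec v = c * (v 0 * v 3 - v 1 * v 2)) ∧
    {v : Fin 4 → ℝ | QA16 v = 0 ∧ QB16 v = 0} =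
      {v : Fin 4 → ℝ | (v 0 = 0 ∧ v 1 = 0) ∨ (v 2 = 0 ∧ v 3 = 0)} ∧
    (∀ v : Fin 4 → ℝ, QA16 v = 0 → QB16 v = 0 → v ⬝ᵥ C.mulVec v = 0) ∧
    LinearIndependent ℝ ![A, B, C] :=
  rank_four_counterexample_general A B C hA hB hC
end

section
/- On ℝ^(2d), d ≥ 2, with symplectic coordinates (x₁,…,x_d, y₁,…,y_d) and Poisson bracket {f,g} = Σⱼ(∂f/∂yⱼ ∂g/∂xⱼ − ∂f/∂xⱼ ∂g/∂yⱼ), let Q_A(x,y) = x₁² − (y₁²+⋯+y_{d-1}² + x₂²+⋯+x_{d-1}²) and Q_B(x,y) = x₁x_d. Then Q_C := {Q_A, Q_B} = −2y₁x_d, the matrices A, B, C are linearly independent, A, B form a non-dissipative pair, and Q_C vanishes on the common zero set {Q_A = 0} ∩ {Q_B = 0}. -/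
open Matrix

/-- `Q_A(x,y) = x₁² − (y₁²+⋯+y_{d-1}² + x₂²+⋯+x_{d-1}²)` on `ℝ^{2d}` with `d = m+2`,
with `x i = v (Sum.inl i)` and `y j = v (Sum.inr j)` (0-indexed). -/
noncomputable def QA18 (m : ℕ) (v : Fin (m+2) ⊕ Fin (m+2) → ℝ) : ℝ :=
  (v (Sum.inl 0))^2 -
    ((∑ j : Fin (m+2), if (j : ℕ) < m + 1 then (v (Sum.inr j))^2 else 0) +
     (∑ i : Fin (m+2), if 0 < (i : ℕ) ∧ (i : ℕ) < m + 1 then (v (Sum.inl i))^2 else 0))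

/-- `Q_B(x,y) = x₁ x_d`. -/
noncomputable def QB18 (m : ℕ) (v : Fin (m+2) ⊕ Fin (m+2) → ℝ) : ℝ :=
  v (Sum.inl 0) * v (Sum.inl (Fin.last (m+1)))

/-- The standard symplectic Poisson bracket
`{f,g} = Σⱼ (∂f/∂yⱼ ∂g/∂xⱼ − ∂f/∂xⱼ ∂g/∂yⱼ)` on `ℝ^{2d}`, `d = m+2`. -/
noncomputable def poissonBracket18 (m : ℕ)
    (f g : (Fin (m+2) ⊕ Fin (m+2) → ℝ) → ℝ) (v : Fin (m+2) ⊕ Fin (m+2) → ℝ) : ℝ :=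
  ∑ j : Fin (m+2),
    ((fderiv ℝ f v (Pi.single (Sum.inr j) (1 : ℝ))) *
        (fderiv ℝ g v (Pi.single (Sum.inl j) (1 : ℝ))) -
      (fderiv ℝ f v (Pi.single (Sum.inl j) (1 : ℝ))) *
        (fderiv ℝ g v (Pi.single (Sum.inr j) (1 : ℝ))))

/-! `Q_A` is the diagonal form `∑ σₖ vₖ²` with `σ(y₁) = -1` and `σ(y_d) = 0`, so `∂Q_A/∂yⱼ = 2σ(yⱼ)yⱼ`,
while `Q_B = x₁x_d` depends on `x₁, x_d` only; hence `{Q_A, Q_B} = 2σ(y₁)y₁x_d + 2σ(y_d)y_d x₁ = -2y₁x_d`.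
Linear independence of `A, B, C` and non-dissipativity of `A, B` are read off the quadratic forms on
vectors supported on `x₁, y₁, x_d`, where `Q_A = x₁² - y₁²`, `Q_B = x₁x_d`, `Q_C = -2y₁x_d`.
On `{Q_B = 0}` either `x_d = 0`, or `x₁ = 0` and then `0 = Q_A ≤ x₁² - y₁²` forces `y₁ = 0`. -/

section PartialDerivatives

variable {ι : Type*} [Fintype ι] [DecidableEq ι]

theorem fderiv_sum_mul_sq_apply_single (σ v : ι → ℝ) (i : ι) :
    fderiv ℝ (fun w : ι → ℝ => ∑ k, σ k * w k ^ 2) v (Pi.single i 1) = 2 * σ i * v i := by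
  have hderiv : HasFDerivAt (fun w : ι → ℝ => ∑ k, σ k * w k ^ 2)
      (∑ k, σ k • (2 * v k) • ContinuousLinearMap.proj k) v :=
    HasFDerivAt.fun_sum fun k _ => by
      simpa using ((hasFDerivAt_apply (𝕜 := ℝ) k v).pow 2).const_mul (σ k)
  rw [hderiv.fderiv]
  simp only [_root_.sum_apply, _root_.smul_apply,
    ContinuousLinearMap.proj_apply, Pi.single_apply, smul_eq_mul, mul_ite, mul_one, mul_zero,
    Finset.sum_ite_eq', Finset.mem_univ, if_true]
  ring

theorem fderiv_apply_mul_apply_single (a b i : ι) (v : ι → ℝ) :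
    fderiv ℝ (fun w : ι → ℝ => w a * w b) v (Pi.single i 1) =
      (Pi.single i 1 : ι → ℝ) a * v b + v a * (Pi.single i 1 : ι → ℝ) b := by
  rw [((hasFDerivAt_apply (𝕜 := ℝ) a v).fun_mul (hasFDerivAt_apply (𝕜 := ℝ) b v)).fderiv]
  simp only [_root_.add_apply, _root_.smul_apply,
    ContinuousLinearMap.proj_apply, smul_eq_mul]
  ring

end PartialDerivatives

def qaWeight (m : ℕ) : Fin (m+2) ⊕ Fin (m+2) → ℝ :=
  Sum.elim (fun i => if i = 0 then 1 else if (i : ℕ) < m + 1 then -1 else 0)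
    (fun j => if (j : ℕ) < m + 1 then -1 else 0)

theorem QA18_eq_sum_qaWeight_mul_sq (m : ℕ) :
    QA18 m = fun v => ∑ k, qaWeight m k * v k ^ 2 := by
  funext v
  have hx : ∑ i : Fin (m+2), qaWeight m (Sum.inl i) * v (Sum.inl i) ^ 2 =
      v (Sum.inl 0) ^ 2 -
        ∑ i : Fin (m+2), if 0 < (i : ℕ) ∧ (i : ℕ) < m + 1 then v (Sum.inl i) ^ 2 else 0 := by
    rw [eq_sub_iff_add_eq, ← Finset.sum_add_distrib, Fintype.sum_eq_single 0]
    · simp [qaWeight]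
    · intro i hi
      by_cases h : (i : ℕ) ≤ m <;> simp [qaWeight, hi, h, Fin.pos_iff_ne_zero]
  have hy : ∑ j : Fin (m+2), qaWeight m (Sum.inr j) * v (Sum.inr j) ^ 2 =
      -∑ j : Fin (m+2), if (j : ℕ) < m + 1 then v (Sum.inr j) ^ 2 else 0 := by
    rw [← Finset.sum_neg_distrib]
    refine Finset.sum_congr rfl fun j _ => ?_
    by_cases h : (j : ℕ) ≤ m <;> simp [qaWeight, h]
  rw [QA18, Fintype.sum_sum_type, hx, hy]
  ring

theorem poissonBracket18_QA18_QB18 (m : ℕ) (v : Fin (m+2) ⊕ Fin (m+2) → ℝ) :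
    poissonBracket18 m (QA18 m) (QB18 m) v =
      -2 * v (Sum.inr 0) * v (Sum.inl (Fin.last (m+1))) := by
  have hQB : QB18 m = fun w => w (Sum.inl 0) * w (Sum.inl (Fin.last (m+1))) := rfl
  simp only [poissonBracket18, QA18_eq_sum_qaWeight_mul_sq, hQB, fderiv_sum_mul_sq_apply_single,
    fderiv_apply_mul_apply_single]
  simp only [Pi.single_apply, Sum.inl.injEq, reduceCtorEq, if_false, ite_mul, mul_ite, one_mul,
    zero_mul, mul_one, mul_zero, mul_add, add_zero, sub_zero, Finset.sum_add_distrib,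
    Finset.sum_ite_eq, Finset.mem_univ, if_true]
  simp [qaWeight]

theorem QA18_le_sq_sub_sq (m : ℕ) (v : Fin (m+2) ⊕ Fin (m+2) → ℝ) :
    QA18 m v ≤ v (Sum.inl 0) ^ 2 - v (Sum.inr 0) ^ 2 := by
  have hy : v (Sum.inr 0) ^ 2 ≤
      ∑ j : Fin (m+2), if (j : ℕ) < m + 1 then v (Sum.inr j) ^ 2 else 0 := by
    simpa using Finset.single_le_sum (f := fun j : Fin (m+2) =>
      if (j : ℕ) < m + 1 then v (Sum.inr j) ^ 2 else 0)
      (fun j _ => by positivity) (Finset.mem_univ 0)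
  have hx : 0 ≤ ∑ i : Fin (m+2),
      if 0 < (i : ℕ) ∧ (i : ℕ) < m + 1 then v (Sum.inl i) ^ 2 else 0 :=
    Finset.sum_nonneg fun i _ => by positivity
  rw [QA18]
  linarith

theorem mul_eq_zero_of_QA18_eq_zero_of_QB18_eq_zero {m : ℕ} {v : Fin (m+2) ⊕ Fin (m+2) → ℝ}
    (hA : QA18 m v = 0) (hB : QB18 m v = 0) :
    v (Sum.inr 0) * v (Sum.inl (Fin.last (m+1))) = 0 := by
  rcases mul_eq_zero.mp hB with hx | hx
  · have := QA18_le_sq_sub_sq m v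
    rw [hA, hx] at this
    have hy : v (Sum.inr 0) = 0 := by nlinarith
    rw [hy, zero_mul]
  · rw [hx, mul_zero]

def testVector (m : ℕ) (a b c : ℝ) : Fin (m+2) ⊕ Fin (m+2) → ℝ :=
  fun k => if k = Sum.inl 0 then a else if k = Sum.inr 0 then b
    else if k = Sum.inl (Fin.last (m+1)) then c else 0

theorem testVector_inl_zero {m : ℕ} (a b c : ℝ) : testVector m a b c (Sum.inl 0) = a := by
  simp [testVector]

theorem testVector_inr_zero {m : ℕ} (a b c : ℝ) : testVector m a b c (Sum.inr 0) = b := by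
  simp [testVector]

theorem testVector_inl_last {m : ℕ} (a b c : ℝ) :
    testVector m a b c (Sum.inl (Fin.last (m+1))) = c := by
  simp [testVector, Fin.ext_iff]

theorem QA18_testVector {m : ℕ} (a b c : ℝ) : QA18 m (testVector m a b c) = a ^ 2 - b ^ 2 := by
  have hy : (∑ j : Fin (m+2),
      if (j : ℕ) < m + 1 then testVector m a b c (Sum.inr j) ^ 2 else 0) = b ^ 2 := by
    rw [Fintype.sum_eq_single 0]
    · simp [testVector]
    · intro j hj
      simp [testVector, hj]
  have hx : (∑ i : Fin (m+2),
      if 0 < (i : ℕ) ∧ (i : ℕ) < m + 1 then testVector m a b c (Sum.inl i) ^ 2 else 0) = 0 := by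
    refine Finset.sum_eq_zero fun i _ => ?_
    by_cases h : 0 < (i : ℕ) ∧ (i : ℕ) < m + 1
    · have hi0 : i ≠ 0 := by rintro rfl; simp at h
      have hil : i ≠ Fin.last (m+1) := by rintro rfl; simp at h
      simp [testVector, h, hi0, hil]
    · rw [if_neg h]
  rw [QA18, hy, hx, testVector_inl_zero]
  ring

theorem QB18_testVector {m : ℕ} (a b c : ℝ) : QB18 m (testVector m a b c) = a * c := by
  rw [QB18, testVector_inl_zero, testVector_inl_last]

theorem eq_zero_of_forall_QA18_QB18_bracket_comb_eq_zero {m : ℕ} {a b c : ℝ}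
    (h : ∀ v, a * QA18 m v + b * QB18 m v +
      c * (-2 * v (Sum.inr 0) * v (Sum.inl (Fin.last (m+1)))) = 0) :
    a = 0 ∧ b = 0 ∧ c = 0 := by
  have key : ∀ x y z : ℝ, a * (x ^ 2 - y ^ 2) + b * (x * z) + c * (-2 * y * z) = 0 := by
    intro x y z
    simpa [QA18_testVector, QB18_testVector, testVector_inr_zero, testVector_inl_last]
      using h (testVector m x y z)
  have h100 := key 1 0 0
  have h101 := key 1 0 1
  have h011 := key 0 1 1
  refine ⟨?_, ?_, ?_⟩ <;> linarith

theorem eq_zero_of_forall_QA18_QB18_comb_nonneg {m : ℕ} {a b : ℝ}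
    (h : ∀ v, 0 ≤ a * QA18 m v + b * QB18 m v) : a = 0 ∧ b = 0 := by
  have key : ∀ x y z : ℝ, 0 ≤ a * (x ^ 2 - y ^ 2) + b * (x * z) := by
    intro x y z
    simpa [QA18_testVector, QB18_testVector] using h (testVector m x y z)
  have h100 := key 1 0 0
  have h010 := key 0 1 0
  have h101 := key 1 0 1
  have h10m := key 1 0 (-1)
  constructor <;> linarith

theorem isotropic_radical_counterexample_general (m : ℕ)
    (A B C : Matrix (Fin (m+2) ⊕ Fin (m+2)) (Fin (m+2) ⊕ Fin (m+2)) ℝ)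
    (hA : ∀ v : Fin (m+2) ⊕ Fin (m+2) → ℝ, v ⬝ᵥ A.mulVec v = QA18 m v)
    (hB : ∀ v : Fin (m+2) ⊕ Fin (m+2) → ℝ, v ⬝ᵥ B.mulVec v = QB18 m v)
    (hC : ∀ v : Fin (m+2) ⊕ Fin (m+2) → ℝ,
      v ⬝ᵥ C.mulVec v = poissonBracket18 m (QA18 m) (QB18 m) v) :
    (∀ v : Fin (m+2) ⊕ Fin (m+2) → ℝ,
      v ⬝ᵥ C.mulVec v = -2 * v (Sum.inr 0) * v (Sum.inl (Fin.last (m+1)))) ∧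
    LinearIndependent ℝ ![A, B, C] ∧
    (∀ F ∈ Submodule.span ℝ
        ({A, B} : Set (Matrix (Fin (m+2) ⊕ Fin (m+2)) (Fin (m+2) ⊕ Fin (m+2)) ℝ)),
      F.PosSemidef → F = 0) ∧
    (∀ v : Fin (m+2) ⊕ Fin (m+2) → ℝ, QA18 m v = 0 → QB18 m v = 0 →
      v ⬝ᵥ C.mulVec v = 0) := by
  have hCv : ∀ v, v ⬝ᵥ C.mulVec v = -2 * v (Sum.inr 0) * v (Sum.inl (Fin.last (m+1))) :=
    fun v => (hC v).trans (poissonBracket18_QA18_QB18 m v)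
  refine ⟨hCv, ?_, ?_, ?_⟩
  · refine Fintype.linearIndependent_iff.mpr fun g hg => ?_
    simp only [Fin.sum_univ_three, Fin.isValue, cons_val] at hg
    obtain ⟨h0, h1, h2⟩ := eq_zero_of_forall_QA18_QB18_bracket_comb_eq_zero
      (a := g 0) (b := g 1) (c := g 2) fun v => by
        simpa [add_mulVec, smul_mulVec, hA, hB, hCv] using congrArg (fun M => v ⬝ᵥ M *ᵥ v) hg
    intro i
    fin_cases i <;> assumption
  · intro F hF hF_psd
    obtain ⟨a, b, rfl⟩ := Submodule.mem_span_pair.mp hF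
    obtain ⟨rfl, rfl⟩ := eq_zero_of_forall_QA18_QB18_comb_nonneg (a := a) (b := b) fun v => by
      simpa [add_mulVec, smul_mulVec, hA, hB] using hF_psd.dotProduct_mulVec_nonneg v
    simp
  · intro v hQA hQB
    rw [hCv, mul_assoc, mul_eq_zero_of_QA18_eq_zero_of_QB18_eq_zero hQA hQB, mul_zero]

theorem isotropic_radical_counterexample (m : ℕ)
    (A B C : Matrix (Fin (m+2) ⊕ Fin (m+2)) (Fin (m+2) ⊕ Fin (m+2)) ℝ)
    (hAs : A.IsSymm) (hBs : B.IsSymm) (hCs : C.IsSymm)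
    (hA : ∀ v : Fin (m+2) ⊕ Fin (m+2) → ℝ, v ⬝ᵥ A.mulVec v = QA18 m v)
    (hB : ∀ v : Fin (m+2) ⊕ Fin (m+2) → ℝ, v ⬝ᵥ B.mulVec v = QB18 m v)
    (hC : ∀ v : Fin (m+2) ⊕ Fin (m+2) → ℝ,
      v ⬝ᵥ C.mulVec v = poissonBracket18 m (QA18 m) (QB18 m) v) :
    (∀ v : Fin (m+2) ⊕ Fin (m+2) → ℝ,
      v ⬝ᵥ C.mulVec v = -2 * v (Sum.inr 0) * v (Sum.inl (Fin.last (m+1)))) ∧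
    LinearIndependent ℝ ![A, B, C] ∧
    (∀ F ∈ Submodule.span ℝ
        ({A, B} : Set (Matrix (Fin (m+2) ⊕ Fin (m+2)) (Fin (m+2) ⊕ Fin (m+2)) ℝ)),
      F.PosSemidef → F = 0) ∧
    (∀ v : Fin (m+2) ⊕ Fin (m+2) → ℝ, QA18 m v = 0 → QB18 m v = 0 →
      v ⬝ᵥ C.mulVec v = 0) :=
  isotropic_radical_counterexample_general m A B C hA hB hC
end
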